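/- arXiv:chao-dyn/9706001 — 10 statements merged into one kernel-verified Lean document; each statement's English description precedes it below -/
import Mathlib

section
/- Let f(x) = x + (1/2)M(x)x be a quadratic map of ℝⁿ in standard form. If det(Df(x)) = det(I + M(x)) = 1 for all x ∈ ℝⁿ, then M(x)ⁿ = 0 for all x ∈ ℝⁿ (the matrix M(x) is nilpotent, with characteristic polynomial (−ζ)ⁿ). -/
open Matrix Polynomial

/-- If `f(x) = x + (1/2) M(x) x` is a quadratic map of `ℝⁿ` in standard
form and `det(Df(x)) = det(I + M(x)) = 1` for all `x`, then `M(x)ⁿ = 0` for all `x`. -/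
theorem quadratic_standard_form_det_one_implies_nilpotent
    (n : ℕ) (M : (Fin n → ℝ) →ₗ[ℝ] Matrix (Fin n) (Fin n) ℝ)
    (hsym : ∀ x y : Fin n → ℝ, (M x).mulVec y = (M y).mulVec x)
    (f : (Fin n → ℝ) → (Fin n → ℝ))
    (hf : ∀ x, f x = x + (1 / 2 : ℝ) • (M x).mulVec x)
    (hdet : ∀ x, ((1 : Matrix (Fin n) (Fin n) ℝ) + M x).det = 1) :
    ∀ x, (M x) ^ n = 0 := by
  intro x
  set A := M x with hA
  have key : ∀ t : ℝ, Polynomial.eval t A.charpoly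
      = (t • (1 : Matrix (Fin n) (Fin n) ℝ) - A).det := by
    intro t
    rw [Matrix.charpoly, _root_.eval_det, matPolyEquiv_charmatrix]
    congr 1
    simp [Matrix.scalar, smul_eq_diagonal_mul]
  have h2 : ∀ t : ℝ, t ≠ 0 → Polynomial.eval t A.charpoly = t ^ n := by
    intro t ht
    rw [key]
    have hM : M ((-t⁻¹) • x) = (-t⁻¹) • A := by rw [_root_.map_smul, hA]
    have hEq : t • (1 : Matrix (Fin n) (Fin n) ℝ) - A
        = t • ((1 : Matrix (Fin n) (Fin n) ℝ) + M ((-t⁻¹) • x)) := by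
      rw [hM, smul_add, smul_smul]
      field_simp
      rw [sub_eq_add_neg, neg_one_smul]
    rw [hEq, det_smul, hdet, mul_one, Fintype.card_fin]
  have hcp : A.charpoly = X ^ n := by
    apply Polynomial.eq_of_infinite_eval_eq
    apply (Set.Ioi_infinite (0:ℝ)).mono
    intro t ht
    simp only [Set.mem_setOf_eq, eval_pow, eval_X]
    exact h2 t (ne_of_gt ht)
  have h3 := Matrix.aeval_self_charpoly A
  rw [hcp] at h3
  simpa using h3
end

section
/- Let f(x) = x + (1/2)M(x)x be a bijective quadratic map of ℝⁿ in standard form, and suppose its inverse is also a quadratic map in standard form, f⁻¹(x) = x + (1/2)N(x)x with N linear in x and satisfying N(x)y = N(y)x. Then N(x)x = −M(x)x for all x (so f⁻¹(x) = x − (1/2)M(x)x), and M(x)²x = 0 for all x ∈ ℝⁿ. -/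
open Matrix

/-- If `f(x) = x + (1/2) M(x) x` is a bijective quadratic map of `ℝⁿ` in
standard form whose inverse is also quadratic in standard form,
`f⁻¹(x) = x + (1/2) N(x) x`, then `N(x)x = -M(x)x` for all `x`
(so `f⁻¹(x) = x - (1/2) M(x) x`) and `M(x)² x = 0` for all `x`. -/
theorem quadratic_inverse_implies_shear
    (n : ℕ) (M N : (Fin n → ℝ) →ₗ[ℝ] Matrix (Fin n) (Fin n) ℝ)
    (hsymM : ∀ x y : Fin n → ℝ, (M x).mulVec y = (M y).mulVec x)
    (hsymN : ∀ x y : Fin n → ℝ, (N x).mulVec y = (N y).mulVec x)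
    (f g : (Fin n → ℝ) → (Fin n → ℝ))
    (hf : ∀ x, f x = x + (1 / 2 : ℝ) • (M x).mulVec x)
    (hg : ∀ x, g x = x + (1 / 2 : ℝ) • (N x).mulVec x)
    (hbij : Function.Bijective f)
    (hgl : Function.LeftInverse g f) (hgr : Function.RightInverse g f) :
    (∀ x, (N x).mulVec x = -((M x).mulVec x)) ∧
    (∀ x, g x = x - (1 / 2 : ℝ) • (M x).mulVec x) ∧
    (∀ x, (M x).mulVec ((M x).mulVec x) = 0) := by
  -- Key expansion: plug `t • x` into `g (f y) = y` and expand everything.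
  have expand : ∀ (x : Fin n → ℝ) (t : ℝ),
      (2*t^2) • (M x).mulVec x + (2*t^2) • (N x).mulVec x
        + (2*t^3) • (N ((M x).mulVec x)).mulVec x
        + (t^4/2) • (N ((M x).mulVec x)).mulVec ((M x).mulVec x) = 0 := by
    intro x t
    have h := hgl (t • x)
    rw [hf, hg] at h
    have hsym := hsymN x ((M x).mulVec x)
    simp only [_root_.map_smul, map_add, smul_mulVec, mulVec_smul, mulVec_add,
      add_mulVec, smul_add, smul_smul] at h
    linear_combination (norm := module) (4:ℝ) • h - (t^3) • hsym
  -- Extract the coefficientwise equations using t = 1, -1, 2.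
  have hb : ∀ x : Fin n → ℝ, (N ((M x).mulVec x)).mulVec x = 0 := by
    intro x
    have h1 := expand x 1
    have h2 := expand x (-1)
    norm_num at h1 h2
    linear_combination (norm := module) (1/4:ℝ) • h1 - (1/4:ℝ) • h2
  have hA : ∀ x : Fin n → ℝ, (N x).mulVec x = -((M x).mulVec x) := by
    intro x
    have h1 := expand x 1
    have h2 := expand x (-1)
    have h3 := expand x 2
    norm_num at h1 h2 h3
    linear_combination (norm := module) (1/3:ℝ) • h1 + (1/3:ℝ) • h2 - (1/24:ℝ) • h3
      + (2/3:ℝ) • hb x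
  -- Polarize hA to get `N x y = - M x y` for all x, y.
  have hNM : ∀ x y : Fin n → ℝ, (N x).mulVec y = -((M x).mulVec y) := by
    intro x y
    have h := hA (x + y)
    simp only [map_add, add_mulVec, mulVec_add] at h
    have e1 := hA x
    have e2 := hA y
    have e3 := hsymN x y
    have e4 := hsymM x y
    linear_combination (norm := module) (1/2:ℝ) • h - (1/2:ℝ) • e1 - (1/2:ℝ) • e2
      + (1/2:ℝ) • e3 + (1/2:ℝ) • e4
  refine ⟨hA, ?_, ?_⟩
  · intro x
    rw [hg, hA x]
    module
  · intro x
    have h := hb x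
    rw [hNM ((M x).mulVec x) x, hsymM ((M x).mulVec x) x] at h
    exact neg_eq_zero.mp h
end

section
/- Let f(x) = x + (1/2)M(x)x be a quadratic map of ℝⁿ in standard form satisfying M(x)²x = 0 for all x ∈ ℝⁿ. For k ∈ ℤ define g_k(x) = x + (k/2)M(x)x. Then g_k ∘ g_l = g_{k+l} for all k, l ∈ ℤ; in particular f is bijective with inverse g_{−1}, and f^k = g_k for all k ∈ ℤ, i.e. the k-th iterate of f is f^k(x) = x + (k/2)M(x)x. -/
open Matrix

/-- If `f(x) = x + (1/2) M(x) x` is a quadratic map of `ℝⁿ` in standard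
form with `M(x)² x = 0` for all `x`, and `g_k(x) = x + (k/2) M(x) x` for `k ∈ ℤ`,
then `g_k ∘ g_l = g_{k+l}`, `f` is bijective with inverse `g_{-1}`, and the `k`-th
iterate of `f` (in either time direction) is `g_k`. -/
theorem quadratic_shear_iterates
    (n : ℕ) (M : (Fin n → ℝ) →ₗ[ℝ] Matrix (Fin n) (Fin n) ℝ)
    (hsym : ∀ x y : Fin n → ℝ, (M x).mulVec y = (M y).mulVec x)
    (f : (Fin n → ℝ) → (Fin n → ℝ))
    (hf : ∀ x, f x = x + (1 / 2 : ℝ) • (M x).mulVec x)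
    (hshear : ∀ x, (M x).mulVec ((M x).mulVec x) = 0)
    (g : ℤ → (Fin n → ℝ) → (Fin n → ℝ))
    (hg : ∀ (k : ℤ) (x : Fin n → ℝ), g k x = x + ((k : ℝ) / 2) • (M x).mulVec x) :
    (∀ k l : ℤ, g k ∘ g l = g (k + l)) ∧
    Function.Bijective f ∧
    Function.LeftInverse (g (-1)) f ∧ Function.RightInverse (g (-1)) f ∧
    (∀ k : ℕ, f^[k] = g (k : ℤ)) ∧
    (∀ k : ℕ, (g (-1))^[k] = g (-(k : ℤ))) := by
  -- Key lemma: with u = M(x)x we have M(u)u = 0.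
  have hkey : ∀ x : Fin n → ℝ, (M ((M x).mulVec x)).mulVec ((M x).mulVec x) = 0 := by
    intro x
    set u := (M x).mulVec x with hu
    set w := (M u).mulVec u with hw
    have h1 : (M x).mulVec u = 0 := hshear x
    have h2 : (M u).mulVec x = 0 := by rw [← hsym]; exact h1
    have expand : ∀ t : ℝ,
        t • w + (t^2) • (M x).mulVec w + (t^3) • (M u).mulVec w = 0 := by
      intro t
      have h := hshear (x + t • u)
      have inner : (M (x + t • u)).mulVec (x + t • u) = u + (t^2) • w := by
        rw [map_add, _root_.map_smul]
        simp only [add_mulVec, smul_mulVec, mulVec_add, mulVec_smul, h1, h2,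
          smul_zero, add_zero, zero_add]
        module
      rw [inner, map_add, _root_.map_smul] at h
      simp only [add_mulVec, smul_mulVec, mulVec_add, mulVec_smul, h1, h2,
        smul_zero, add_zero, zero_add] at h
      rw [← h]
      module
    have hw0 : w = 0 := by
      funext i
      have e1 := congrFun (expand 1) i
      have e2 := congrFun (expand (-1)) i
      have e3 := congrFun (expand 2) i
      simp only [Pi.add_apply, Pi.smul_apply, smul_eq_mul, Pi.zero_apply] at e1 e2 e3
      have : w i = 0 := by nlinarith [e1, e2, e3]
      simpa using this
    exact hw0
  -- invariance of M(x)x along g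
  have hinv : ∀ (l : ℤ) (x : Fin n → ℝ),
      (M (g l x)).mulVec (g l x) = (M x).mulVec x := by
    intro l x
    set u := (M x).mulVec x with hu
    have h1 : (M x).mulVec u = 0 := hshear x
    have h2 : (M u).mulVec x = 0 := by rw [← hsym]; exact h1
    have h3 : (M u).mulVec u = 0 := hkey x
    rw [hg, map_add, _root_.map_smul]
    simp only [add_mulVec, smul_mulVec, mulVec_add, mulVec_smul, ← hu, h1, h2, h3,
      smul_zero, add_zero, zero_add]
  have hcomp : ∀ (k l : ℤ) (x : Fin n → ℝ), g k (g l x) = g (k + l) x := by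
    intro k l x
    rw [hg k, hinv l x, hg l, hg (k + l)]
    push_cast
    module
  have hcomp' : ∀ k l : ℤ, g k ∘ g l = g (k + l) := by
    intro k l; funext x; exact hcomp k l x
  have hg0 : ∀ x, g 0 x = x := by
    intro x; rw [hg]; simp
  have hfg : f = g 1 := by
    funext x; rw [hf, hg]; norm_num
  have hli : Function.LeftInverse (g (-1)) f := by
    intro x; rw [hfg, hcomp]; simpa using hg0 x
  have hri : Function.RightInverse (g (-1)) f := by
    intro x; rw [hfg, hcomp]; simpa using hg0 x
  refine ⟨hcomp', ⟨hli.injective, hri.surjective⟩, hli, hri, ?_, ?_⟩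
  · intro k
    induction k with
    | zero => funext x; simpa using (hg0 x).symm
    | succ m ih =>
      funext x
      rw [Function.iterate_succ', Function.comp_apply, ih, hfg, hcomp]
      push_cast
      ring_nf
  · intro k
    induction k with
    | zero => funext x; simpa using (hg0 x).symm
    | succ m ih =>
      funext x
      rw [Function.iterate_succ', Function.comp_apply, ih, hcomp]
      push_cast
      ring_nf
end

section
/- Let f(x) = x + (1/2)M(x)x be a quadratic shear of ℝ³ (a bijective quadratic map in standard form with M(x)²x = 0 for all x). Then there exists a nonzero vector x₀ ∈ ℝ³ such that f(x₀) = x₀, i.e. M(x₀)x₀ = 0. -/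
open Matrix

/-- Every quadratic shear `f(x) = x + (1/2) M(x) x` of `ℝ³` has a nonzero
fixed point `x₀`, i.e. a nonzero vector with `M(x₀) x₀ = 0`. -/
theorem quadratic_shear_R3_has_nonzero_fixed_point
    (M : (Fin 3 → ℝ) →ₗ[ℝ] Matrix (Fin 3) (Fin 3) ℝ)
    (hsym : ∀ x y : Fin 3 → ℝ, (M x).mulVec y = (M y).mulVec x)
    (f : (Fin 3 → ℝ) → (Fin 3 → ℝ))
    (hf : ∀ x, f x = x + (1 / 2 : ℝ) • (M x).mulVec x)
    (hbij : Function.Bijective f)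
    (hshear : ∀ x, (M x).mulVec ((M x).mulVec x) = 0) :
    ∃ x₀ : Fin 3 → ℝ, x₀ ≠ 0 ∧ f x₀ = x₀ ∧ (M x₀).mulVec x₀ = 0 := by
  -- polarization of the shear identity
  have key : ∀ x y : Fin 3 → ℝ,
      (M x).mulVec ((M x).mulVec y) + (M x).mulVec ((M y).mulVec x)
        + (M y).mulVec ((M x).mulVec x) = 0 := by
    intro x y
    have hA := hshear (x + y)
    have hB := hshear (x - y)
    have hy := hshear y
    simp only [map_add, map_sub, add_mulVec, sub_mulVec, mulVec_add, mulVec_sub] at hA hB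
    have h2 : (2:ℝ) • ((M x).mulVec ((M x).mulVec y) + (M x).mulVec ((M y).mulVec x)
        + (M y).mulVec ((M x).mulVec x)) = 0 := by
      linear_combination (norm := module) hA - hB - (2:ℝ) • hy
    rcases smul_eq_zero.mp h2 with h | h
    · norm_num at h
    · exact h
  -- a fixed point is the same as a zero of Q x = M x * x
  have hfix : ∀ x : Fin 3 → ℝ, (M x).mulVec x = 0 → f x = x := by
    intro x hx
    rw [hf, hx, smul_zero, add_zero]
  set e : Fin 3 → ℝ := fun _ => 1 with he
  by_cases hQ : (M e).mulVec e = 0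
  · refine ⟨e, ?_, hfix e hQ, hQ⟩
    intro h
    have := congrFun h 0
    simp [he] at this
  · -- take x₀ = Q e; then Q x₀ = 0 by the polarization identity
    have h := key e ((M e).mulVec e)
    have h1 : (M e).mulVec ((M e).mulVec ((M e).mulVec e)) = 0 := by
      rw [hshear e, mulVec_zero]
    have h2 : (M e).mulVec ((M ((M e).mulVec e)).mulVec e) = 0 := by
      rw [hsym ((M e).mulVec e) e, hshear e, mulVec_zero]
    rw [h1, h2] at h
    have hQQ : (M ((M e).mulVec e)).mulVec ((M e).mulVec e) = 0 := by simpa using h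
    exact ⟨(M e).mulVec e, hQ, hfix _ hQQ, hQQ⟩
end

section
/- A function f : ℝ³ → ℝ³ is a quadratic shear if and only if there exist a vector v ∈ ℝ³ and a symmetric 3×3 real matrix P with Pv = 0 such that f(x) = x + (1/2)(xᵀPx)v for all x ∈ ℝ³. -/
open Matrix

section QuadShearAux
variable {M : (Fin 3 → ℝ) →ₗ[ℝ] Matrix (Fin 3) (Fin 3) ℝ}

lemma qs_star (hsymm : ∀ x y, (M x).mulVec y = (M y).mulVec x)
    (hnull : ∀ x, (M x).mulVec ((M x).mulVec x) = 0) (x y : Fin 3 → ℝ) :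
    (M y).mulVec ((M x).mulVec x) = (-2 : ℝ) • (M x).mulVec ((M x).mulVec y) := by
  have expand1 : ∀ u v : Fin 3 → ℝ,
      (M (u + v)).mulVec ((M (u + v)).mulVec (u + v)) =
      (M u).mulVec ((M u).mulVec u) + (M u).mulVec ((M u).mulVec v) +
      (M u).mulVec ((M v).mulVec u) + (M u).mulVec ((M v).mulVec v) +
      (M v).mulVec ((M u).mulVec u) + (M v).mulVec ((M u).mulVec v) +
      (M v).mulVec ((M v).mulVec u) + (M v).mulVec ((M v).mulVec v) := by
    intro u v
    simp only [map_add, Matrix.add_mulVec, Matrix.mulVec_add]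
    abel
  have expand2 : ∀ u v : Fin 3 → ℝ,
      (M (u - v)).mulVec ((M (u - v)).mulVec (u - v)) =
      (M u).mulVec ((M u).mulVec u) - (M u).mulVec ((M u).mulVec v) -
      (M u).mulVec ((M v).mulVec u) + (M u).mulVec ((M v).mulVec v) -
      (M v).mulVec ((M u).mulVec u) + (M v).mulVec ((M u).mulVec v) +
      (M v).mulVec ((M v).mulVec u) - (M v).mulVec ((M v).mulVec v) := by
    intro u v
    simp only [map_sub, Matrix.sub_mulVec, Matrix.mulVec_sub]
    abel
  have h1 := hnull (x + y); rw [expand1 x y, hsymm y x] at h1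
  have h2 := hnull (x - y); rw [expand2 x y, hsymm y x] at h2
  have ha := hnull x
  have hb := hnull y
  funext i
  have e1 := congrFun h1 i
  have e2 := congrFun h2 i
  have e3 := congrFun ha i
  have e4 := congrFun hb i
  simp only [Pi.add_apply, Pi.sub_apply, Pi.smul_apply, Pi.zero_apply, smul_eq_mul] at e1 e2 e3 e4 ⊢
  linarith

lemma qs_anticom (hsymm : ∀ x y, (M x).mulVec y = (M y).mulVec x)
    (hnull : ∀ x, (M x).mulVec ((M x).mulVec x) = 0) (x y z : Fin 3 → ℝ) :
    (M z).mulVec ((M x).mulVec y) =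
      -((M x).mulVec ((M y).mulVec z) + (M y).mulVec ((M x).mulVec z)) := by
  have h1 := qs_star hsymm hnull (x + y) z
  simp only [map_add, Matrix.add_mulVec, Matrix.mulVec_add, smul_add] at h1
  rw [hsymm y x] at h1
  have h2 := qs_star hsymm hnull x z
  have h3 := qs_star hsymm hnull y z
  funext i
  have e1 := congrFun h1 i
  have e2 := congrFun h2 i
  have e3 := congrFun h3 i
  simp only [Pi.add_apply, Pi.neg_apply, Pi.smul_apply, Pi.zero_apply, smul_eq_mul] at e1 e2 e3 ⊢
  linarith

lemma qs_cube (hsymm : ∀ x y, (M x).mulVec y = (M y).mulVec x)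
    (hnull : ∀ x, (M x).mulVec ((M x).mulVec x) = 0) (z v : Fin 3 → ℝ) :
    (M z).mulVec ((M z).mulVec ((M z).mulVec v)) = 0 := by
  have s1 := qs_star hsymm hnull z v
  have s2 : (M z).mulVec ((M v).mulVec ((M z).mulVec z)) =
      (-2 : ℝ) • (M z).mulVec ((M z).mulVec ((M z).mulVec v)) := by
    rw [s1, Matrix.mulVec_smul]
  have s3 := qs_anticom hsymm hnull z v ((M z).mulVec z)
  rw [hnull z, Matrix.mulVec_zero] at s3
  have s4 := qs_star hsymm hnull z ((M z).mulVec v)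
  have s5 := hsymm ((M z).mulVec z) ((M z).mulVec v)
  funext i
  have e2 := congrFun s2 i
  have e3 := congrFun s3 i
  have e4 := congrFun s4 i
  have e5 := congrFun s5 i
  simp only [Pi.add_apply, Pi.neg_apply, Pi.smul_apply, Pi.zero_apply, smul_eq_mul,
    add_zero] at e2 e3 e4 e5 ⊢
  linarith

lemma qs_sqzero (hsymm : ∀ x y, (M x).mulVec y = (M y).mulVec x)
    (hnull : ∀ x, (M x).mulVec ((M x).mulVec x) = 0) (x₀ y₀ : Fin 3 → ℝ) :
    (M x₀).mulVec ((M x₀).mulVec y₀) = 0 := by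
  by_contra hN
  have hsw := qs_star hsymm hnull x₀ y₀
  -- w := (M x₀).mulVec x₀
  have hwne : (M x₀).mulVec x₀ ≠ 0 := by
    intro h0
    rw [h0, Matrix.mulVec_zero] at hsw
    exact hN (by
      have := hsw.symm
      rcases smul_eq_zero.mp this with h | h
      · norm_num at h
      · exact h)
  set w := (M x₀).mulVec x₀ with hwdef
  set u1 := (M x₀).mulVec y₀ with hu1def
  set u2 := (M x₀).mulVec ((M x₀).mulVec y₀) with hu2def
  have hc3 : (M x₀).mulVec u2 = 0 := qs_cube hsymm hnull x₀ y₀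
  have hc4 : (M x₀).mulVec ((M x₀).mulVec u2) = 0 := by rw [hc3, Matrix.mulVec_zero]
  have hli : LinearIndependent ℝ ![y₀, u1, u2] := by
    rw [Fintype.linearIndependent_iff]
    intro g hg
    rw [Fin.sum_univ_three] at hg
    simp only [Matrix.cons_val_zero, Matrix.cons_val_one, Matrix.head_cons,
      Matrix.cons_val_two, Matrix.tail_cons] at hg
    have h2 : g 0 • u2 = 0 := by
      have := congrArg (fun t => (M x₀).mulVec ((M x₀).mulVec t)) hg
      simpa [Matrix.mulVec_add, Matrix.mulVec_smul, Matrix.mulVec_zero,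
        qs_cube hsymm hnull x₀ y₀, hc3, hc4, hu1def, ← hu2def, -Matrix.mulVec_mulVec] using this
    have hg0 : g 0 = 0 := by
      rcases smul_eq_zero.mp h2 with h | h
      · exact h
      · exact absurd h hN
    have h3 : g 1 • u2 = 0 := by
      have := congrArg (fun t => (M x₀).mulVec t) hg
      simpa [Matrix.mulVec_add, Matrix.mulVec_smul, Matrix.mulVec_zero, hg0,
        hc3, ← hu2def] using this
    have hg1 : g 1 = 0 := by
      rcases smul_eq_zero.mp h3 with h | h
      · exact h
      · exact absurd h hN
    have h4 : g 2 • u2 = 0 := by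
      rw [hg0, hg1] at hg; simpa using hg
    have hg2 : g 2 = 0 := by
      rcases smul_eq_zero.mp h4 with h | h
      · exact h
      · exact absurd h hN
    intro i; fin_cases i <;> assumption
  have hsp := hli.span_eq_top_of_card_eq_finrank
    (by simp [Module.finrank_fin_fun])
  have hwmem : w ∈ Submodule.span ℝ (Set.range ![y₀, u1, u2]) := by
    rw [hsp]; trivial
  rw [Submodule.mem_span_range_iff_exists_fun] at hwmem
  obtain ⟨c, hc⟩ := hwmem
  rw [Fin.sum_univ_three] at hc
  simp only [Matrix.cons_val_zero, Matrix.cons_val_one, Matrix.head_cons,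
    Matrix.cons_val_two, Matrix.tail_cons] at hc
  have hNw : (M x₀).mulVec w = 0 := hnull x₀
  have hd2 : c 0 • u2 = 0 := by
    have := congrArg (fun t => (M x₀).mulVec ((M x₀).mulVec t)) hc
    simpa [Matrix.mulVec_add, Matrix.mulVec_smul, Matrix.mulVec_zero, hNw,
      qs_cube hsymm hnull x₀ y₀, hc3, hc4, hu1def, ← hu2def, -Matrix.mulVec_mulVec] using this
  have hc0 : c 0 = 0 := by
    rcases smul_eq_zero.mp hd2 with h | h
    · exact h
    · exact absurd h hN
  have hd3 : c 1 • u2 = 0 := by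
    have := congrArg (fun t => (M x₀).mulVec t) hc
    simpa [Matrix.mulVec_add, Matrix.mulVec_smul, Matrix.mulVec_zero, hNw, hc0,
      hc3, ← hu2def] using this
  have hc1 : c 1 = 0 := by
    rcases smul_eq_zero.mp hd3 with h | h
    · exact h
    · exact absurd h hN
  have hwc : w = c 2 • u2 := by rw [hc0, hc1] at hc; simpa using hc.symm
  have hc2 : c 2 ≠ 0 := by
    intro h; rw [h, zero_smul] at hwc; exact hwne hwc
  -- M y₀ w = -2 • u2 = (-2 / c 2) • w
  have hmu : (M y₀).mulVec w = (-2 / c 2) • w := by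
    rw [hsw, hwc, smul_smul]
    congr 1
    field_simp
  have hcube3 := qs_cube hsymm hnull y₀ w
  simp only [hmu, Matrix.mulVec_smul, smul_smul] at hcube3
  rcases smul_eq_zero.mp hcube3 with h | h
  · field_simp at h
    norm_num at h
  · exact hwne h

lemma qs_kill (hsymm : ∀ x y, (M x).mulVec y = (M y).mulVec x)
    (hnull : ∀ x, (M x).mulVec ((M x).mulVec x) = 0) (z x y : Fin 3 → ℝ) :
    (M z).mulVec ((M x).mulVec y) = 0 := by
  have hac : (M x).mulVec ((M y).mulVec z) + (M y).mulVec ((M x).mulVec z) = 0 := by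
    have h := qs_sqzero hsymm hnull (x + y) z
    simp only [map_add, Matrix.add_mulVec, Matrix.mulVec_add] at h
    have h1 := qs_sqzero hsymm hnull x z
    have h2 := qs_sqzero hsymm hnull y z
    funext i
    have e := congrFun h i
    have e1 := congrFun h1 i
    have e2 := congrFun h2 i
    simp only [Pi.add_apply, Pi.zero_apply] at e e1 e2 ⊢
    linarith
  rw [qs_anticom hsymm hnull x y z, hac, neg_zero]

lemma qs_forward (f : (Fin 3 → ℝ) → (Fin 3 → ℝ))
    (hsymm : ∀ x y, (M x).mulVec y = (M y).mulVec x)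
    (hf : ∀ x, f x = x + (1 / 2 : ℝ) • (M x).mulVec x)
    (hnull : ∀ x, (M x).mulVec ((M x).mulVec x) = 0) :
    ∃ (v : Fin 3 → ℝ) (P : Matrix (Fin 3) (Fin 3) ℝ),
      Pᵀ = P ∧ P.mulVec v = 0 ∧
      ∀ x, f x = x + (1 / 2 * (x ⬝ᵥ P.mulVec x)) • v := by
  by_cases h0 : ∀ x y : Fin 3 → ℝ, (M x).mulVec y = 0
  · refine ⟨0, 0, by simp, by simp, fun x => ?_⟩
    rw [hf x, h0 x x]
    simp
  · push_neg at h0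
    obtain ⟨a, b, hv0⟩ := h0
    have hkill := qs_kill hsymm hnull
    have hMv0 : ∀ z, (M ((M a).mulVec b)).mulVec z = 0 :=
      fun z => (hsymm ((M a).mulVec b) z).trans (hkill z a b)
    have hMv0' : ∀ z, (M z).mulVec ((M a).mulVec b) = 0 := fun z => hkill z a b
    -- all values of M are parallel to v₀ := (M a).mulVec b
    have hpar : ∀ x y : Fin 3 → ℝ, ∃ t : ℝ, (M x).mulVec y = t • ((M a).mulVec b) := by
      by_contra hcon
      push_neg at hcon
      obtain ⟨x₁, y₁, hu⟩ := hcon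
      have hMu : ∀ z, (M ((M x₁).mulVec y₁)).mulVec z = 0 :=
        fun z => (hsymm ((M x₁).mulVec y₁) z).trans (hkill z x₁ y₁)
      have hMu' : ∀ z, (M z).mulVec ((M x₁).mulVec y₁) = 0 := fun z => hkill z x₁ y₁
      have hune : (M x₁).mulVec y₁ ≠ 0 := by
        intro h
        exact hu 0 (by rw [h, zero_smul])
      have hlt : Submodule.span ℝ (Set.range ![(M a).mulVec b, (M x₁).mulVec y₁]) < ⊤ := by
        apply span_lt_top_of_card_lt_finrank
        have h1 : (Set.range ![(M a).mulVec b, (M x₁).mulVec y₁]).toFinset.card ≤ 2 := by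
          rw [Set.toFinset_range]
          exact Finset.card_image_le.trans (by simp)
        have h2 : Module.finrank ℝ (Fin 3 → ℝ) = 3 := Module.finrank_fin_fun ℝ
        omega
      obtain ⟨e, -, he⟩ := SetLike.exists_of_lt hlt
      have hli : LinearIndependent ℝ ![(M a).mulVec b, (M x₁).mulVec y₁, e] := by
        rw [Fintype.linearIndependent_iff]
        intro g hg
        rw [Fin.sum_univ_three] at hg
        simp only [Matrix.cons_val_zero, Matrix.cons_val_one, Matrix.head_cons,
          Matrix.cons_val_two, Matrix.tail_cons] at hg
        have hg2 : g 2 = 0 := by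
          by_contra hg2
          apply he
          rw [Submodule.mem_span_range_iff_exists_fun]
          refine ⟨![-(g 0 / g 2), -(g 1 / g 2)], ?_⟩
          rw [Fin.sum_univ_two]
          simp only [Matrix.cons_val_zero, Matrix.cons_val_one, Matrix.head_cons]
          funext i
          have hgi := congrFun hg i
          simp only [Pi.add_apply, Pi.smul_apply, Pi.zero_apply, smul_eq_mul] at hgi ⊢
          field_simp
          linear_combination (-1 : ℝ) * hgi
        rw [hg2, zero_smul, add_zero] at hg
        have hg1 : g 1 = 0 := by
          by_contra hg1
          apply hu (-(g 0) / g 1)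
          funext i
          have hgi := congrFun hg i
          simp only [Pi.add_apply, Pi.smul_apply, Pi.zero_apply, smul_eq_mul] at hgi ⊢
          field_simp
          linear_combination hgi
        rw [hg1, zero_smul, add_zero] at hg
        have hg0 : g 0 = 0 := by
          rcases smul_eq_zero.mp hg with h | h
          · exact h
          · exact absurd h hv0
        intro i; fin_cases i <;> assumption
      have hsp := hli.span_eq_top_of_card_eq_finrank
        (by simp [Module.finrank_fin_fun ℝ])
      have decomp : ∀ x : Fin 3 → ℝ, ∃ c : Fin 3 → ℝ,
          c 0 • ((M a).mulVec b) + c 1 • ((M x₁).mulVec y₁) + c 2 • e = x := by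
        intro x
        have hx : x ∈ Submodule.span ℝ
            (Set.range ![(M a).mulVec b, (M x₁).mulVec y₁, e]) := by rw [hsp]; trivial
        rw [Submodule.mem_span_range_iff_exists_fun] at hx
        obtain ⟨c, hc⟩ := hx
        refine ⟨c, ?_⟩
        rw [Fin.sum_univ_three] at hc
        simpa using hc
      have key : ∀ x y : Fin 3 → ℝ, ∃ s : ℝ,
          (M x).mulVec y = s • ((M e).mulVec e) := by
        intro x y
        obtain ⟨cx, hx⟩ := decomp x
        obtain ⟨cy, hy⟩ := decomp y
        refine ⟨cx 2 * cy 2, ?_⟩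
        rw [← hx, ← hy]
        simp only [map_add, _root_.map_smul, Matrix.add_mulVec, Matrix.smul_mulVec,
          Matrix.mulVec_add, Matrix.mulVec_smul, hMv0, hMu, hMv0', hMu',
          smul_zero, zero_add, add_zero, zero_mulVec, Matrix.mulVec_zero]
        rw [smul_smul, mul_comm]
      obtain ⟨s1, hs1⟩ := key a b
      obtain ⟨s2, hs2⟩ := key x₁ y₁
      have hs1ne : s1 ≠ 0 := by
        intro h; rw [h, zero_smul] at hs1; exact hv0 hs1
      apply hu (s2 / s1)
      rw [hs2, hs1, smul_smul]
      congr 1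
      field_simp
    -- extract the coefficient function
    choose T hT using hpar
    set v₀ := (M a).mulVec b with hv₀def
    set P : Matrix (Fin 3) (Fin 3) ℝ :=
      Matrix.of (fun i j => T (Pi.single i 1) (Pi.single j 1)) with hPdef
    have hPs : ∀ i j, (M (Pi.single i 1)).mulVec (Pi.single j 1) = P i j • v₀ :=
      fun i j => hT _ _
    have hsingle : ∀ x : Fin 3 → ℝ,
        x = x 0 • (Pi.single 0 1 : Fin 3 → ℝ) + x 1 • (Pi.single 1 1 : Fin 3 → ℝ) + x 2 • (Pi.single 2 1 : Fin 3 → ℝ) := by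
      intro x; funext i; fin_cases i <;> simp [Pi.single_apply]
    have claim : ∀ x y : Fin 3 → ℝ, (M x).mulVec y = (x ⬝ᵥ P.mulVec y) • v₀ := by
      intro x y
      conv_lhs => rw [hsingle x, hsingle y]
      simp only [map_add, _root_.map_smul, Matrix.add_mulVec, Matrix.smul_mulVec,
        Matrix.mulVec_add, Matrix.mulVec_smul, hPs, smul_smul]
      funext k
      simp only [dotProduct, Matrix.mulVec, Fin.sum_univ_three, Pi.add_apply,
        Pi.smul_apply, smul_eq_mul, Matrix.of_apply]
      ring
    refine ⟨v₀, P, ?_, ?_, ?_⟩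
    · ext i j
      have h1 := hPs i j
      have h2 := hPs j i
      rw [hsymm] at h2
      have h3 : P i j • v₀ = P j i • v₀ := h1 ▸ h2 ▸ rfl
      have := smul_left_injective ℝ hv0 h3
      rw [Matrix.transpose_apply]
      exact this.symm
    · funext i
      have h := claim (Pi.single i 1) v₀
      rw [hMv0' (Pi.single i 1)] at h
      have hc : (Pi.single i 1 ⬝ᵥ P.mulVec v₀) = 0 := by
        rcases smul_eq_zero.mp h.symm with h' | h'
        · exact h'
        · exact absurd h' hv0
      have hdd : Pi.single i 1 ⬝ᵥ P.mulVec v₀ = P.mulVec v₀ i := by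
        simp [dotProduct, Pi.single_apply]
      rw [hdd] at hc
      simpa using hc
    · intro x
      rw [hf x, claim x x, smul_smul]
end QuadShearAux

lemma qs_vmv (v w y : Fin 3 → ℝ) :
    (Matrix.vecMulVec v w).mulVec y = (w ⬝ᵥ y) • v := by
  funext i
  simp only [Matrix.mulVec, dotProduct, Matrix.vecMulVec_apply, Pi.smul_apply,
    smul_eq_mul]
  rw [Finset.sum_mul]
  ring_nf

lemma qs_backward (f : (Fin 3 → ℝ) → (Fin 3 → ℝ)) (v : Fin 3 → ℝ)
    (P : Matrix (Fin 3) (Fin 3) ℝ) (hPt : Pᵀ = P) (hPv : P.mulVec v = 0)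
    (hf : ∀ x, f x = x + (1 / 2 * (x ⬝ᵥ P.mulVec x)) • v) :
    ∃ M : (Fin 3 → ℝ) →ₗ[ℝ] Matrix (Fin 3) (Fin 3) ℝ,
      (∀ x y : Fin 3 → ℝ, (M x).mulVec y = (M y).mulVec x) ∧
      (∀ x, f x = x + (1 / 2 : ℝ) • (M x).mulVec x) ∧
      Function.Bijective f ∧
      (∀ x, (M x).mulVec ((M x).mulVec x) = 0) := by
  have hsymdot : ∀ x y : Fin 3 → ℝ, P.mulVec x ⬝ᵥ y = P.mulVec y ⬝ᵥ x := by
    intro x y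
    calc P.mulVec x ⬝ᵥ y = y ⬝ᵥ P.mulVec x := dotProduct_comm _ _
      _ = (P.vecMul y) ⬝ᵥ x := dotProduct_mulVec _ _ _
      _ = (Pᵀ.mulVec y) ⬝ᵥ x := by rw [Matrix.mulVec_transpose]
      _ = (P.mulVec y) ⬝ᵥ x := by rw [hPt]
  have hvd : ∀ x, P.mulVec x ⬝ᵥ v = 0 := by
    intro x; rw [hsymdot x v, hPv, zero_dotProduct]
  have hvd' : ∀ x, v ⬝ᵥ P.mulVec x = 0 := by
    intro x; rw [dotProduct_comm]; exact hvd x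
  refine ⟨{ toFun := fun x => Matrix.vecMulVec v (P.mulVec x),
            map_add' := by
              intro x y
              ext i j
              simp [Matrix.mulVec_add, Matrix.vecMulVec_apply, mul_add]
            map_smul' := by
              intro c x
              ext i j
              simp [Matrix.mulVec_smul, Matrix.vecMulVec_apply]
              ring }, ?_, ?_, ?_, ?_⟩
  · intro x y
    simp only [LinearMap.coe_mk, AddHom.coe_mk]
    rw [qs_vmv, qs_vmv, hsymdot]
  · intro x
    simp only [LinearMap.coe_mk, AddHom.coe_mk]
    rw [hf x, qs_vmv, smul_smul]
    congr 2
    rw [dotProduct_comm]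
  · -- bijectivity
    have hq : ∀ (x : Fin 3 → ℝ) (c : ℝ), (x + c • v) ⬝ᵥ P.mulVec (x + c • v) = x ⬝ᵥ P.mulVec x := by
      intro x c
      simp only [Matrix.mulVec_add, Matrix.mulVec_smul, dotProduct_add, add_dotProduct,
        smul_dotProduct, dotProduct_smul, hPv, hvd', dotProduct_zero, smul_eq_mul,
        mul_zero, add_zero, smul_zero]
    have hq' : ∀ (y : Fin 3 → ℝ) (c : ℝ),
        (y - c • v) ⬝ᵥ P.mulVec (y - c • v) = y ⬝ᵥ P.mulVec y := by
      intro y c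
      simp only [Matrix.mulVec_sub, Matrix.mulVec_smul, dotProduct_sub, sub_dotProduct,
        smul_dotProduct, dotProduct_smul, hPv, hvd', dotProduct_zero, smul_eq_mul,
        mul_zero, sub_zero, smul_zero]
    rw [Function.bijective_iff_has_inverse]
    refine ⟨fun y => y - (1 / 2 * (y ⬝ᵥ P.mulVec y)) • v, ?_, ?_⟩
    · intro x
      simp only [hf x, hq]
      abel
    · intro y
      rw [hf (y - (1 / 2 * (y ⬝ᵥ P.mulVec y)) • v), hq']
      abel
  · intro x
    simp only [LinearMap.coe_mk, AddHom.coe_mk]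
    simp only [qs_vmv, dotProduct_smul, smul_eq_mul, hvd, mul_zero, zero_smul]

/-- A map `f : ℝ³ → ℝ³` is a quadratic shear (a bijective quadratic map
in standard form `f(x) = x + (1/2) M(x) x` with `M(x)² x = 0` for all `x`) if and
only if there exist a vector `v ∈ ℝ³` and a symmetric matrix `P` with `Pv = 0` such
that `f(x) = x + (1/2)(xᵀPx) v`. -/
theorem quadratic_shear_R3_characterization
    (f : (Fin 3 → ℝ) → (Fin 3 → ℝ)) :
    (∃ M : (Fin 3 → ℝ) →ₗ[ℝ] Matrix (Fin 3) (Fin 3) ℝ,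
      (∀ x y : Fin 3 → ℝ, (M x).mulVec y = (M y).mulVec x) ∧
      (∀ x, f x = x + (1 / 2 : ℝ) • (M x).mulVec x) ∧
      Function.Bijective f ∧
      (∀ x, (M x).mulVec ((M x).mulVec x) = 0)) ↔
    (∃ (v : Fin 3 → ℝ) (P : Matrix (Fin 3) (Fin 3) ℝ),
      Pᵀ = P ∧ P.mulVec v = 0 ∧
      ∀ x, f x = x + (1 / 2 * (x ⬝ᵥ P.mulVec x)) • v) := by
  constructor
  · rintro ⟨M, hsymm, hf, -, hnull⟩
    exact qs_forward f hsymm hf hnull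
  · rintro ⟨v, P, hPt, hPv, hf⟩
    exact qs_backward f v P hPt hPv hf
end

section
/- Let S(x) = x + (1/2)M(x)x be a quadratic map of ℝ^{2n} in standard form, and let J be the standard 2n×2n symplectic matrix (J = [[0, I],[−I, 0]] in n×n blocks). If S is symplectic, i.e. (I + M(x))ᵀ J (I + M(x)) = J for all x ∈ ℝ^{2n}, then M(x)ᵀJ = JᵀM(x), M(x)ᵀ J M(x) = 0, and M(x)² = 0 for all x ∈ ℝ^{2n}; in particular S is a quadratic shear. -/
open Matrix

/-- If `S(x) = x + (1/2) M(x) x` is a quadratic map of `ℝ^{2n}` in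
standard form which is symplectic, i.e. `(I + M(x))ᵀ J (I + M(x)) = J` for all `x`
where `J = [[0, I], [-I, 0]]`, then `M(x)ᵀ J = Jᵀ M(x)`, `M(x)ᵀ J M(x) = 0` and
`M(x)² = 0` for all `x`; in particular `S` is a quadratic shear. -/
theorem symplectic_quadratic_is_shear
    (n : ℕ)
    (J : Matrix (Fin n ⊕ Fin n) (Fin n ⊕ Fin n) ℝ)
    (hJ : J = Matrix.fromBlocks (0 : Matrix (Fin n) (Fin n) ℝ) 1 (-1) 0)
    (M : (Fin n ⊕ Fin n → ℝ) →ₗ[ℝ] Matrix (Fin n ⊕ Fin n) (Fin n ⊕ Fin n) ℝ)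
    (hsym : ∀ x y : Fin n ⊕ Fin n → ℝ, (M x).mulVec y = (M y).mulVec x)
    (S : (Fin n ⊕ Fin n → ℝ) → (Fin n ⊕ Fin n → ℝ))
    (hS : ∀ x, S x = x + (1 / 2 : ℝ) • (M x).mulVec x)
    (hsymp : ∀ x, ((1 : Matrix (Fin n ⊕ Fin n) (Fin n ⊕ Fin n) ℝ) + M x)ᵀ * J *
      ((1 : Matrix (Fin n ⊕ Fin n) (Fin n ⊕ Fin n) ℝ) + M x) = J) :
    (∀ x, (M x)ᵀ * J = Jᵀ * M x) ∧
    (∀ x, (M x)ᵀ * J * M x = 0) ∧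
    (∀ x, M x * M x = 0) ∧
    Function.Bijective S ∧
    (∀ x, (M x).mulVec ((M x).mulVec x) = 0) := by
  have hJt : Jᵀ = -J := by
    rw [hJ]
    simp [Matrix.fromBlocks_transpose, Matrix.fromBlocks_neg]
  have hJJ : J * J = -1 := by
    rw [hJ]
    simp [Matrix.fromBlocks_multiply, ← Matrix.fromBlocks_one, Matrix.fromBlocks_neg]
  -- basic identity from symplecticity
  have E : ∀ x, (M x)ᵀ * J + J * (M x) + (M x)ᵀ * J * (M x) = 0 := by
    intro x
    have h := hsymp x
    have h2 : J + ((M x)ᵀ * J + J * (M x) + (M x)ᵀ * J * (M x)) =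
        ((1 : Matrix (Fin n ⊕ Fin n) (Fin n ⊕ Fin n) ℝ) + M x)ᵀ * J *
        ((1 : Matrix (Fin n ⊕ Fin n) (Fin n ⊕ Fin n) ℝ) + M x) := by
      rw [Matrix.transpose_add, Matrix.transpose_one]
      noncomm_ring
    rw [h] at h2
    exact left_eq_add.mp h2.symm
  have hQ : ∀ x, (M x)ᵀ * J * M x = 0 := by
    intro x
    have h1 := E x
    have h2 := E ((2:ℝ) • x)
    rw [M.map_smul] at h2
    simp only [Matrix.transpose_smul, Matrix.smul_mul, Matrix.mul_smul, smul_smul] at h2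
    norm_num at h2
    have h3 : (2:ℝ) • ((M x)ᵀ * J + J * (M x) + (M x)ᵀ * J * (M x)) = 0 := by
      rw [h1, smul_zero]
    have h4 : (2:ℝ) • ((M x)ᵀ * J * M x) =
        ((2:ℝ) • ((M x)ᵀ * J) + (2:ℝ) • (J * M x) + (4:ℝ) • ((M x)ᵀ * J * M x)) -
        (2:ℝ) • ((M x)ᵀ * J + J * (M x) + (M x)ᵀ * J * (M x)) := by
      module
    rw [h2, h3, sub_zero] at h4
    rcases smul_eq_zero.mp h4 with h | h
    · norm_num at h
    · exact h
  have hP : ∀ x, (M x)ᵀ * J + J * M x = 0 := by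
    intro x
    have h1 := E x
    rw [hQ x, add_zero] at h1
    exact h1
  have r1 : ∀ x, (M x)ᵀ * J = Jᵀ * M x := by
    intro x
    rw [hJt, Matrix.neg_mul]
    exact eq_neg_of_add_eq_zero_left (hP x)
  have hM2 : ∀ x, M x * M x = 0 := by
    intro x
    have h : (M x)ᵀ * J = -(J * M x) := eq_neg_of_add_eq_zero_left (hP x)
    have hMt : (M x)ᵀ = J * (M x) * J := by
      have h2 : (M x)ᵀ * J * J = -(J * M x) * J := by rw [h]
      rw [Matrix.mul_assoc ((M x)ᵀ), hJJ] at h2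
      simp only [mul_neg_one, neg_mul, neg_inj] at h2
      exact h2
    have hq := hQ x
    rw [hMt] at hq
    have h3 : J * M x * J * J * M x = -(J * (M x * M x)) := by
      rw [Matrix.mul_assoc (J * M x), hJJ]
      noncomm_ring
    rw [h3] at hq
    have h4 : J * (M x * M x) = 0 := neg_eq_zero.mp hq
    have h5 : J * (J * (M x * M x)) = 0 := by rw [h4, Matrix.mul_zero]
    rw [← Matrix.mul_assoc, hJJ, neg_one_mul, neg_eq_zero] at h5
    exact h5
  have hMMx : ∀ x, (M x).mulVec ((M x).mulVec x) = 0 := by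
    intro x
    rw [Matrix.mulVec_mulVec, hM2, Matrix.zero_mulVec]
  -- anticommutation by polarization
  have hanti : ∀ x y, M x * M y = -(M y * M x) := by
    intro x y
    have h := hM2 (x + y)
    rw [M.map_add] at h
    have hexp : (M x + M y) * (M x + M y) =
        M x * M x + (M x * M y + M y * M x) + M y * M y := by noncomm_ring
    rw [hexp, hM2 x, hM2 y, zero_add, add_zero] at h
    exact eq_neg_of_add_eq_zero_left h
  -- key computation: M(x + c•u) (x + c•u) = u  where u = M x x
  have haux : ∀ (x : Fin n ⊕ Fin n → ℝ) (c : ℝ),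
      (M (x + c • (M x).mulVec x)).mulVec (x + c • (M x).mulVec x) = (M x).mulVec x := by
    intro x c
    set u := (M x).mulVec x with hu
    have f1 : (M x).mulVec u = 0 := hMMx x
    have f2 : (M u).mulVec x = 0 := by rw [← hsym]; exact f1
    have f3 : (M u).mulVec u = 0 := by
      rw [hu, Matrix.mulVec_mulVec, hanti, Matrix.neg_mulVec, ← Matrix.mulVec_mulVec, f2,
        Matrix.mulVec_zero, neg_zero]
    rw [M.map_add, M.map_smul]
    rw [Matrix.add_mulVec, Matrix.mulVec_add, Matrix.mulVec_add,
      Matrix.smul_mulVec, Matrix.mulVec_smul, Matrix.mulVec_smul,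
      Matrix.smul_mulVec]
    rw [f1, f2, f3]
    simp [hu]
  -- bijectivity via explicit inverse
  have hbij : Function.Bijective S := by
    rw [Function.bijective_iff_has_inverse]
    refine ⟨fun y => y + (-(1/2) : ℝ) • (M y).mulVec y, ?_, ?_⟩
    · intro x
      have h := haux x (1/2)
      simp only [hS x, one_div] at h ⊢
      rw [h]
      module
    · intro y
      have h := haux y (-(1/2))
      simp only [hS, one_div] at h ⊢
      rw [h]
      module
  exact ⟨r1, hQ, hM2, hbij, hMMx⟩
end

section
/- Let S(x) = x + (1/2)M(x)x be a symplectic quadratic shear of ℝ^{2n} (so (I + M(x))ᵀJ(I + M(x)) = J and M(x)² = 0 for all x). Let N = {y ∈ ℝ^{2n} : M(x)y = 0 for all x ∈ ℝ^{2n}} = {y : M(y) = 0} be the null space of M, and let N^⊥ = {u ∈ ℝ^{2n} : uᵀJy = 0 for all y ∈ N} be its symplectic orthogonal complement. Then N^⊥ ⊆ N. -/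
open Matrix

/-- For a symplectic quadratic shear `S(x) = x + (1/2) M(x) x` of
`ℝ^{2n}` (so `(I + M(x))ᵀ J (I + M(x)) = J` and `M(x)² = 0` for all `x`), the
symplectic orthogonal complement `N^⊥` of the null space
`N = {y : M(x) y = 0 for all x}` is contained in `N`. -/
theorem symplectic_shear_null_space_coisotropic
    (n : ℕ)
    (J : Matrix (Fin n ⊕ Fin n) (Fin n ⊕ Fin n) ℝ)
    (hJ : J = Matrix.fromBlocks (0 : Matrix (Fin n) (Fin n) ℝ) 1 (-1) 0)
    (M : (Fin n ⊕ Fin n → ℝ) →ₗ[ℝ] Matrix (Fin n ⊕ Fin n) (Fin n ⊕ Fin n) ℝ)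
    (hsym : ∀ x y : Fin n ⊕ Fin n → ℝ, (M x).mulVec y = (M y).mulVec x)
    (S : (Fin n ⊕ Fin n → ℝ) → (Fin n ⊕ Fin n → ℝ))
    (hS : ∀ x, S x = x + (1 / 2 : ℝ) • (M x).mulVec x)
    (hsymp : ∀ x, ((1 : Matrix (Fin n ⊕ Fin n) (Fin n ⊕ Fin n) ℝ) + M x)ᵀ * J *
      ((1 : Matrix (Fin n ⊕ Fin n) (Fin n ⊕ Fin n) ℝ) + M x) = J)
    (hnil : ∀ x, M x * M x = 0)
    (N Nperp : Set (Fin n ⊕ Fin n → ℝ))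
    (hN : N = {y | ∀ x, (M x).mulVec y = 0})
    (hNperp : Nperp = {u | ∀ y ∈ N, u ⬝ᵥ J.mulVec y = 0}) :
    Nperp ⊆ N := by
  -- Jᵀ = -J and J * J = -1
  have hJT : Jᵀ = -J := by
    subst hJ
    simp [Matrix.fromBlocks_transpose, Matrix.fromBlocks_neg]
  have hJJ : J * J = -1 := by
    subst hJ
    rw [Matrix.fromBlocks_multiply]
    simp [← Matrix.fromBlocks_one, Matrix.fromBlocks_neg]
  -- expand hsymp
  have h1 : ∀ x, (M x)ᵀ * J + J * M x + (M x)ᵀ * J * M x = 0 := by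
    intro x
    have h := hsymp x
    rw [Matrix.transpose_add, Matrix.transpose_one] at h
    have e : (1 + (M x)ᵀ) * J * (1 + M x)
        = J + ((M x)ᵀ * J + J * M x + (M x)ᵀ * J * M x) := by noncomm_ring
    rw [e] at h
    exact add_eq_left.mp h
  -- MᵀJM = 0, using M² = 0
  have h2 : ∀ x, (M x)ᵀ * J * M x = 0 := by
    intro x
    have h := congrArg (· * M x) (h1 x)
    simp only [add_mul, zero_mul, mul_assoc] at h
    rw [hnil x] at h
    simpa [mul_assoc] using h
  -- MᵀJ = -(JM)
  have h3 : ∀ x, (M x)ᵀ * J = -(J * M x) := by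
    intro x
    have h := h1 x
    rw [h2 x, add_zero] at h
    exact eq_neg_of_add_eq_zero_left h
  -- J*M(x) is symmetric
  have hJMsym : ∀ x, (J * M x)ᵀ = J * M x := by
    intro x
    rw [Matrix.transpose_mul, hJT, Matrix.mul_neg, h3 x, neg_neg]
  -- anticommutation from polarizing hnil
  have hac : ∀ x y, M x * M y = -(M y * M x) := by
    intro x y
    have h := hnil (x + y)
    rw [map_add] at h
    have e : (M x * M y + M y * M x) + (M x * M x + M y * M y) = 0 := by
      rw [← h]; noncomm_ring
    rw [hnil x, hnil y, add_zero, add_zero] at e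
    exact eq_neg_of_add_eq_zero_left e
  -- range of M(x) lies in N
  have hrange : ∀ w x z, (M w).mulVec ((M x).mulVec z) = 0 := by
    intro w x z
    have key : (M w).mulVec ((M x).mulVec z) = -((M w).mulVec ((M x).mulVec z)) := by
      calc (M w).mulVec ((M x).mulVec z)
          = (M w * M x).mulVec z := by rw [Matrix.mulVec_mulVec]
        _ = -((M x).mulVec ((M w).mulVec z)) := by
            rw [hac w x, Matrix.neg_mulVec, Matrix.mulVec_mulVec]
        _ = -((M x * M z).mulVec w) := by rw [hsym w z, Matrix.mulVec_mulVec]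
        _ = (M z).mulVec ((M x).mulVec w) := by
            rw [hac x z, Matrix.neg_mulVec, neg_neg, Matrix.mulVec_mulVec]
        _ = (M z * M w).mulVec x := by rw [hsym x w, Matrix.mulVec_mulVec]
        _ = -((M w).mulVec ((M z).mulVec x)) := by
            rw [hac z w, Matrix.neg_mulVec, Matrix.mulVec_mulVec]
        _ = -((M w).mulVec ((M x).mulVec z)) := by rw [hsym z x]
    funext i
    have h := congrFun key i
    simp only [Pi.neg_apply] at h
    have : (M w).mulVec ((M x).mulVec z) i = 0 := by linarith
    simpa using this
  -- main argument
  intro u hu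
  rw [hNperp] at hu
  rw [hN]
  intro x
  have horth : ∀ z, ((J * M x).mulVec u) ⬝ᵥ z = 0 := by
    intro z
    have hmem : (M x).mulVec z ∈ N := by
      rw [hN]; intro w; exact hrange w x z
    have h := hu _ hmem
    rw [Matrix.mulVec_mulVec, Matrix.dotProduct_mulVec, ← Matrix.mulVec_transpose,
      hJMsym x] at h
    exact h
  have hz : (J * M x).mulVec u = 0 := by
    have h := horth ((J * M x).mulVec u)
    exact dotProduct_self_eq_zero.mp h
  have h := congrArg (J.mulVec ·) hz
  simp only [Matrix.mulVec_mulVec, ← mul_assoc, hJJ, Matrix.mulVec_zero] at h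
  rw [neg_one_mul, Matrix.neg_mulVec, neg_eq_zero] at h

  exact h
end

section
/- Let f : ℝ^{2n} → ℝ^{2n} be a quadratic symplectic map, i.e. each component of f is a real polynomial of degree at most 2 and Df(x)ᵀ J Df(x) = J for all x, where J is the standard symplectic matrix. Then f = T ∘ S, where T(x) = Lx + b is an affine symplectic map (L = Df(0) satisfies LᵀJL = J, b = f(0)) and S = T⁻¹ ∘ f is a symplectic quadratic shear: S(x) = x + (1/2)M(x)x in standard form with M(x)² = 0 for all x. -/
open Matrix

section Aux

lemma finsupp_deg_le_two {σ : Type*} (d : σ →₀ ℕ) (h : d.sum (fun _ e => e) ≤ 2) :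
    d = 0 ∨ (∃ j, d = Finsupp.single j 1) ∨
      (∃ j k, d = Finsupp.single j 1 + Finsupp.single k 1) := by
  classical
  have hc : Multiset.card (Finsupp.toMultiset d) ≤ 2 := by
    rw [Finsupp.card_toMultiset]; exact h
  interval_cases hm : (Multiset.card (Finsupp.toMultiset d))
  · left
    have h0 := Multiset.card_eq_zero.mp hm
    have := Finsupp.toMultiset_eq_iff.mp h0
    simpa using this
  · right; left
    obtain ⟨a, ha⟩ := Multiset.card_eq_one.mp hm
    refine ⟨a, ?_⟩
    have := Finsupp.toMultiset_eq_iff.mp ha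
    simpa using this
  · right; right
    obtain ⟨a, b, hab⟩ := Multiset.card_eq_two.mp hm
    refine ⟨a, b, ?_⟩
    have := Finsupp.toMultiset_eq_iff.mp hab
    rw [this]
    have : ({a, b} : Multiset σ) = {a} + {b} := rfl
    rw [this, map_add, Multiset.toFinsupp_singleton, Multiset.toFinsupp_singleton]

def IsQuadFn {σ : Type*} [Fintype σ] (g : (σ → ℝ) → ℝ) : Prop :=
  ∃ (c : ℝ) (a : σ → ℝ) (m : σ → σ → ℝ),
    ∀ x, g x = c + (∑ j, a j * x j) + ∑ j, ∑ k, m j k * x j * x k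

lemma IsQuadFn.add {σ : Type*} [Fintype σ] {g h : (σ → ℝ) → ℝ}
    (hg : IsQuadFn g) (hh : IsQuadFn h) : IsQuadFn (fun x => g x + h x) := by
  obtain ⟨c, a, m, hg⟩ := hg
  obtain ⟨c', a', m', hh⟩ := hh
  refine ⟨c + c', a + a', m + m', fun x => ?_⟩
  simp only [hg, hh, Pi.add_apply, add_mul, Finset.sum_add_distrib]
  ring

lemma IsQuadFn.zero {σ : Type*} [Fintype σ] : IsQuadFn (fun _ : σ → ℝ => (0:ℝ)) :=
  ⟨0, 0, 0, fun x => by simp⟩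

lemma IsQuadFn.finset_sum {σ : Type*} [Fintype σ] {ι : Type*} (s : Finset ι)
    (g : ι → (σ → ℝ) → ℝ) (h : ∀ i ∈ s, IsQuadFn (g i)) :
    IsQuadFn (fun x => ∑ i ∈ s, g i x) := by
  classical
  induction s using Finset.induction_on with
  | empty => simpa using IsQuadFn.zero
  | @insert d s hds ih =>
      simp only [Finset.sum_insert hds]
      exact (h d (by simp)).add (ih fun i hi => h i (Finset.mem_insert_of_mem hi))

lemma isQuadFn_eval {σ : Type*} [Fintype σ] [DecidableEq σ]
    (p : MvPolynomial σ ℝ) (hp : p.totalDegree ≤ 2) :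
    IsQuadFn (fun x => MvPolynomial.eval x p) := by
  classical
  have hmono : ∀ d ∈ p.support, ∀ c : ℝ,
      IsQuadFn (fun x => MvPolynomial.eval x (MvPolynomial.monomial d c)) := by
    intro d hd c
    have hdeg : d.sum (fun _ e => e) ≤ 2 :=
      le_trans (MvPolynomial.le_totalDegree hd) hp
    rcases finsupp_deg_le_two d hdeg with h0 | ⟨j, h1⟩ | ⟨j, k, h2⟩
    · refine ⟨c, 0, 0, fun x => by simp [h0]⟩
    · refine ⟨0, fun j' => if j' = j then c else 0, 0, fun x => ?_⟩
      simp [h1, MvPolynomial.eval_monomial, Finsupp.prod_single_index,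
        Finset.sum_ite_eq']
    · refine ⟨0, 0, fun j' k' => if j' = j ∧ k' = k then c else 0, fun x => ?_⟩
      simp only [MvPolynomial.eval_monomial, h2]
      rw [Finsupp.prod_add_index' (fun a => pow_zero (x a)) (fun a b₁ b₂ => pow_add (x a) b₁ b₂)]
      simp [Finsupp.prod_single_index, Finset.sum_ite_eq', ite_and, mul_assoc]
  have key : ∀ x, MvPolynomial.eval x p =
      ∑ d ∈ p.support, MvPolynomial.eval x (MvPolynomial.monomial d (MvPolynomial.coeff d p)) := by
    intro x
    rw [← map_sum, MvPolynomial.support_sum_monomial_coeff p]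
  simp only [key]
  exact IsQuadFn.finset_sum p.support _ (fun d hd => hmono d hd _)

end Aux

/-- Every quadratic symplectic map `f` of `ℝ^{2n}` (each component a
real polynomial of degree at most 2, and `Df(x)ᵀ J Df(x) = J` for all `x`)
decomposes as `f = T ∘ S` where `T(x) = Lx + b` is affine symplectic with
`L = Df(0)`, `b = f(0)`, and `S(x) = x + (1/2) M(x) x` is a symplectic quadratic
shear in standard form with `M(x)² = 0` for all `x`. -/
theorem quadratic_symplectic_decomposition
    (n : ℕ)
    (J : Matrix (Fin n ⊕ Fin n) (Fin n ⊕ Fin n) ℝ)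
    (hJ : J = Matrix.fromBlocks (0 : Matrix (Fin n) (Fin n) ℝ) 1 (-1) 0)
    (f : (Fin n ⊕ Fin n → ℝ) → (Fin n ⊕ Fin n → ℝ))
    (hquad : ∀ i : Fin n ⊕ Fin n, ∃ p : MvPolynomial (Fin n ⊕ Fin n) ℝ,
      p.totalDegree ≤ 2 ∧ ∀ x, f x i = MvPolynomial.eval x p)
    (hsymp : ∀ x, (LinearMap.toMatrix' ((fderiv ℝ f x).toLinearMap))ᵀ * J *
      (LinearMap.toMatrix' ((fderiv ℝ f x).toLinearMap)) = J)
    (L : Matrix (Fin n ⊕ Fin n) (Fin n ⊕ Fin n) ℝ)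
    (hL : L = LinearMap.toMatrix' ((fderiv ℝ f 0).toLinearMap))
    (b : Fin n ⊕ Fin n → ℝ) (hb : b = f 0) :
    Lᵀ * J * L = J ∧
    ∃ M : (Fin n ⊕ Fin n → ℝ) →ₗ[ℝ] Matrix (Fin n ⊕ Fin n) (Fin n ⊕ Fin n) ℝ,
      (∀ x y : Fin n ⊕ Fin n → ℝ, (M x).mulVec y = (M y).mulVec x) ∧
      (∀ x, M x * M x = 0) ∧
      (∀ x, f x = L.mulVec (x + (1 / 2 : ℝ) • (M x).mulVec x) + b) := by
  classical
  -- Step 1: quadratic structure of each component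
  have hq : ∀ i : (Fin n ⊕ Fin n), IsQuadFn (fun x => f x i) := by
    intro i
    obtain ⟨p, hp, hfp⟩ := hquad i
    have : (fun x => f x i) = fun x => MvPolynomial.eval x p := funext hfp
    rw [this]
    exact isQuadFn_eval p hp
  choose c a m hm using fun i => hq i
  -- symmetrized quadratic tensor
  set ms : (Fin n ⊕ Fin n) → (Fin n ⊕ Fin n) → (Fin n ⊕ Fin n) → ℝ := fun i j k => m i j k + m i k j with hms
  have hmssymm : ∀ i j k, ms i j k = ms i k j := by
    intro i j k
    simp only [hms]
    ring
  -- the linear part as a matrix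
  set A : Matrix (Fin n ⊕ Fin n) (Fin n ⊕ Fin n) ℝ := Matrix.of (fun i j => a i j) with hAdef
  -- the linear map x ↦ B(x)
  set Bl : ((Fin n ⊕ Fin n) → ℝ) →ₗ[ℝ] Matrix (Fin n ⊕ Fin n) (Fin n ⊕ Fin n) ℝ :=
    { toFun := fun x => Matrix.of fun i k => ∑ j, ms i j k * x j
      map_add' := by
        intro x y
        ext i k
        simp only [Matrix.of_apply, Matrix.add_apply, Pi.add_apply, mul_add,
          Finset.sum_add_distrib]
      map_smul' := by
        intro t x
        ext i k
        simp only [Matrix.of_apply, Matrix.smul_apply, Pi.smul_apply, smul_eq_mul,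
          RingHom.id_apply, Finset.mul_sum]
        exact Finset.sum_congr rfl fun j _ => by ring } with hBldef
  have hBlapp : ∀ (x : (Fin n ⊕ Fin n) → ℝ) i k, Bl x i k = ∑ j, ms i j k * x j := fun x i k => rfl
  -- symmetry of B
  have hBs : ∀ x y : (Fin n ⊕ Fin n) → ℝ, (Bl x).mulVec y = (Bl y).mulVec x := by
    intro x y
    funext i
    simp only [Matrix.mulVec, dotProduct, hBlapp, Finset.sum_mul]
    rw [Finset.sum_comm]
    exact Finset.sum_congr rfl fun p _ => Finset.sum_congr rfl fun q _ => by
      rw [hmssymm i p q]; ring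
  -- explicit formula for f
  have hf : ∀ x, f x = c + A.mulVec x + (1/2 : ℝ) • (Bl x).mulVec x := by
    intro x
    funext i
    have hmi := hm i x
    simp only at hmi
    have expand : ∑ k, (∑ j, ms i j k * x j) * x k
        = 2 * ∑ j, ∑ k, m i j k * x j * x k := by
      have e1 : ∑ k, (∑ j, ms i j k * x j) * x k
          = ∑ j, ∑ k, ms i j k * x j * x k := by
        simp only [Finset.sum_mul]
        rw [Finset.sum_comm]
      rw [e1]
      have e2 : ∑ j, ∑ k, ms i j k * x j * x k
          = (∑ j, ∑ k, m i j k * x j * x k) + ∑ j, ∑ k, m i k j * x j * x k := by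
        simp only [hms, add_mul, Finset.sum_add_distrib]
      have e3 : ∑ j, ∑ k, m i k j * x j * x k = ∑ j, ∑ k, m i j k * x j * x k := by
        rw [Finset.sum_comm]
        exact Finset.sum_congr rfl fun p _ => Finset.sum_congr rfl fun q _ => by ring
      rw [e2, e3]; ring
    show f x i = c i + A.mulVec x i + (1/2 : ℝ) * (Bl x).mulVec x i
    simp only [Matrix.mulVec, dotProduct, hBlapp, hAdef, Matrix.of_apply]
    rw [expand, hmi]
    ring
  -- derivative of f
  set G : ((Fin n ⊕ Fin n) → ℝ) →ₗ[ℝ]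
      (((Fin n ⊕ Fin n) → ℝ) →L[ℝ] ((Fin n ⊕ Fin n) → ℝ)) :=
    { toFun := fun y => LinearMap.toContinuousLinearMap (Matrix.mulVecLin (Bl y))
      map_add' := by
        intro u v
        ext w
        simp [_root_.map_add, Matrix.add_mulVec]
      map_smul' := by
        intro t u
        ext w
        simp [_root_.map_smul, Matrix.smul_mulVec] } with hGdef
  set F := LinearMap.toContinuousLinearMap G with hFdef
  have hFapp : ∀ u v : (Fin n ⊕ Fin n) → ℝ, F u v = (Bl u).mulVec v := fun u v => rfl
  have hD : ∀ x, HasFDerivAt f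
      (LinearMap.toContinuousLinearMap (Matrix.mulVecLin (A + Bl x))) x := by
    intro x
    have hfe : f = fun y => c + A.mulVec y + (1/2 : ℝ) • (Bl y).mulVec y := funext hf
    rw [hfe]
    have hlin : HasFDerivAt (fun y : (Fin n ⊕ Fin n) → ℝ => A.mulVec y)
        (LinearMap.toContinuousLinearMap (Matrix.mulVecLin A)) x :=
      (LinearMap.toContinuousLinearMap (Matrix.mulVecLin A)).hasFDerivAt
    have hc : HasFDerivAt (fun y => F y) F x := F.hasFDerivAt
    have hu : HasFDerivAt (fun y : (Fin n ⊕ Fin n) → ℝ => y)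
        (ContinuousLinearMap.id ℝ _) x := hasFDerivAt_id x
    have hq2 := (hc.clm_apply hu).const_smul (1/2 : ℝ)
    have htot := (HasFDerivAt.add (hasFDerivAt_const c x) hlin).add hq2
    have heq : ((0 : ((Fin n ⊕ Fin n) → ℝ) →L[ℝ] ((Fin n ⊕ Fin n) → ℝ))
          + LinearMap.toContinuousLinearMap (Matrix.mulVecLin A))
          + (1/2 : ℝ) • ((F x).comp (ContinuousLinearMap.id ℝ _)
            + (ContinuousLinearMap.flip F) x)
        = LinearMap.toContinuousLinearMap (Matrix.mulVecLin (A + Bl x)) := by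
      ext w
      simp only [ContinuousLinearMap.add_apply, ContinuousLinearMap.zero_apply,
        ContinuousLinearMap.smul_apply, ContinuousLinearMap.comp_apply,
        ContinuousLinearMap.coe_id', id_eq, ContinuousLinearMap.flip_apply,
        LinearMap.coe_toContinuousLinearMap', Matrix.mulVecLin_apply]
      rw [hFapp, hFapp, hBs w x, Matrix.add_mulVec]
      have h2 : (1/2 : ℝ) • ((Bl x).mulVec w + (Bl x).mulVec w) = (Bl x).mulVec w := by
        rw [← two_smul ℝ, smul_smul]
        norm_num
      rw [h2, zero_add]
    rw [heq] at htot
    exact htot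
  -- the matrix of the derivative
  have htoM : ∀ x, LinearMap.toMatrix' ((fderiv ℝ f x).toLinearMap) = A + Bl x := by
    intro x
    rw [(hD x).fderiv]
    have : ((LinearMap.toContinuousLinearMap
        (Matrix.mulVecLin (A + Bl x))).toLinearMap) = Matrix.mulVecLin (A + Bl x) :=
      rfl
    rw [this, ← Matrix.toLin'_apply', LinearMap.toMatrix'_toLin']
  -- identify L, b
  have hA : L = A := by
    rw [hL, htoM 0, map_zero, add_zero]
  have hbc : b = c := by
    rw [hb, hf 0]
    funext i
    simp
  have hJJ : J * J = -1 := by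
    subst hJ
    simp [Matrix.fromBlocks_multiply]
    ext (i | i) (j | j) <;>
      simp [Matrix.fromBlocks, Matrix.one_apply]
  have hsymp' : ∀ x, (A + Bl x)ᵀ * J * (A + Bl x) = J := by
    intro x
    have h := hsymp x
    rwa [htoM x] at h
  have h0 : Aᵀ * J * A = J := by
    have h := hsymp' 0
    rwa [map_zero, add_zero] at h
  have hE : ∀ x, Aᵀ * J * Bl x + (Bl x)ᵀ * J * A + (Bl x)ᵀ * J * Bl x = 0 := by
    intro x
    have h1 := hsymp' x
    have hexp : (A + Bl x)ᵀ * J * (A + Bl x)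
        = Aᵀ * J * A + (Aᵀ * J * Bl x + (Bl x)ᵀ * J * A + (Bl x)ᵀ * J * Bl x) := by
      rw [Matrix.transpose_add]
      noncomm_ring
    rw [hexp, h0] at h1
    have := h1.trans (add_zero J).symm
    exact add_left_cancel this
  have hQP : ∀ x, (Bl x)ᵀ * J * Bl x = 0 ∧ Aᵀ * J * Bl x + (Bl x)ᵀ * J * A = 0 := by
    intro x
    have e1 := hE x
    have e2 := hE ((2 : ℝ) • x)
    rw [_root_.map_smul] at e2
    rw [Matrix.transpose_smul] at e2
    simp only [Matrix.smul_mul, Matrix.mul_smul, smul_smul] at e2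
    norm_num at e2
    -- e2 : 2 • M1 + 2 • M2 + 4 • Q = 0
    have h2Q : (2 : ℝ) • ((Bl x)ᵀ * J * Bl x) = 0 := by
      calc (2 : ℝ) • ((Bl x)ᵀ * J * Bl x)
          = ((2:ℝ) • (Aᵀ * J * Bl x) + (2:ℝ) • ((Bl x)ᵀ * J * A) + (4:ℝ) • ((Bl x)ᵀ * J * Bl x))
            - (2:ℝ) • (Aᵀ * J * Bl x + (Bl x)ᵀ * J * A + (Bl x)ᵀ * J * Bl x) := by
            module
        _ = 0 - (2:ℝ) • (0 : Matrix (Fin n ⊕ Fin n) (Fin n ⊕ Fin n) ℝ) := by rw [e1, e2]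
        _ = 0 := by simp
    have hQ : (Bl x)ᵀ * J * Bl x = 0 := by
      rcases smul_eq_zero.mp h2Q with h | h
      · norm_num at h
      · exact h
    refine ⟨hQ, ?_⟩
    rwa [hQ, add_zero] at e1
  -- inverse of A
  set Ainv : Matrix (Fin n ⊕ Fin n) (Fin n ⊕ Fin n) ℝ := -(J * Aᵀ * J) with hAinv
  have hA'A : Ainv * A = 1 := by
    calc Ainv * A = -(J * (Aᵀ * J * A)) := by rw [hAinv]; noncomm_ring
      _ = -(J * J) := by rw [h0]
      _ = 1 := by rw [hJJ]; simp
  have hAA' : A * Ainv = 1 := mul_eq_one_comm.mp hA'A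
  have hJA' : J * Ainv = Aᵀ * J := by
    calc J * Ainv = -(J * J) * (Aᵀ * J) := by rw [hAinv]; noncomm_ring
      _ = Aᵀ * J := by rw [hJJ]; simp
  -- the shear tensor
  refine ⟨by rw [hA]; exact h0, (LinearMap.mulLeft ℝ Ainv).comp Bl, ?_, ?_, ?_⟩
  · intro x y
    show (Ainv * Bl x).mulVec y = (Ainv * Bl y).mulVec x
    rw [← Matrix.mulVec_mulVec, ← Matrix.mulVec_mulVec, hBs x y]
  · intro x
    show (Ainv * Bl x) * (Ainv * Bl x) = 0
    have hJC : J * ((Ainv * Bl x) * (Ainv * Bl x)) = 0 := by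
      calc J * ((Ainv * Bl x) * (Ainv * Bl x))
          = (J * Ainv) * Bl x * Ainv * Bl x := by noncomm_ring
        _ = (Aᵀ * J * Bl x) * Ainv * Bl x := by rw [hJA']
        _ = (-((Bl x)ᵀ * J * A)) * Ainv * Bl x := by
            rw [eq_neg_of_add_eq_zero_left (hQP x).2]
        _ = -((Bl x)ᵀ * J * (A * Ainv) * Bl x) := by noncomm_ring
        _ = -((Bl x)ᵀ * J * Bl x) := by rw [hAA']; noncomm_ring
        _ = 0 := by rw [(hQP x).1, neg_zero]
    calc (Ainv * Bl x) * (Ainv * Bl x)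
        = (-(J * J)) * ((Ainv * Bl x) * (Ainv * Bl x)) := by rw [hJJ]; simp
      _ = (-J) * (J * ((Ainv * Bl x) * (Ainv * Bl x))) := by noncomm_ring
      _ = 0 := by rw [hJC, Matrix.mul_zero]
  · intro x
    show f x = L.mulVec (x + (1/2 : ℝ) • (Ainv * Bl x).mulVec x) + b
    rw [hf x, hA, hbc]
    rw [Matrix.mulVec_add, Matrix.mulVec_smul, Matrix.mulVec_mulVec,
      ← Matrix.mul_assoc, hAA', Matrix.one_mul]
    abel
end

section
/- Let S be a symplectic quadratic shear of ℝ^{2n} = ℝⁿ × ℝⁿ, i.e. S(x) = x + (1/2)M(x)x in standard form with (I + M(x))ᵀJ(I + M(x)) = J and M(x)² = 0 for all x. Then there exists a linear symplectic map λ of ℝ^{2n} and a linear map p ↦ B(p) from ℝⁿ into the symmetric n×n real matrices such that λ ∘ S ∘ λ⁻¹(q, p) = (q + B(p)p, p) for all (q, p) ∈ ℝⁿ × ℝⁿ; equivalently λ ∘ S ∘ λ⁻¹(q, p) = (q + ∇V(p), p) for a homogeneous cubic polynomial V on ℝⁿ. -/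
open Matrix

private lemma dot_shift {m k : Type*} [Fintype m] [Fintype k]
    (A : Matrix m k ℝ) (s : k → ℝ) (t : m → ℝ) :
    (A *ᵥ s) ⬝ᵥ t = s ⬝ᵥ (Aᵀ *ᵥ t) := by
  rw [dotProduct_comm, Matrix.dotProduct_mulVec, dotProduct_comm, Matrix.mulVec_transpose]

private lemma sum_dot {ι m : Type*} [Fintype m] (s : Finset ι) (g : ι → m → ℝ) (t : m → ℝ) :
    (∑ i ∈ s, g i) ⬝ᵥ t = ∑ i ∈ s, g i ⬝ᵥ t := by
  simp only [dotProduct, Finset.sum_apply, Finset.sum_mul]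
  exact Finset.sum_comm

private lemma skew_dot {m : Type*} [Fintype m] (J : Matrix m m ℝ) (hJT : Jᵀ = -J)
    (a b : m → ℝ) : a ⬝ᵥ (J *ᵥ b) = -(b ⬝ᵥ (J *ᵥ a)) := by
  rw [dotProduct_comm, dot_shift, hJT, Matrix.neg_mulVec, dotProduct_neg]


private lemma Jcol (n : ℕ) (J : Matrix (Fin n ⊕ Fin n) (Fin n ⊕ Fin n) ℝ)
    (hJ : J = Matrix.fromBlocks (0 : Matrix (Fin n) (Fin n) ℝ) 1 (-1) 0)
    (w : Fin n ⊕ Fin n → ℝ) :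
    J *ᵥ w = Sum.elim (fun i => w (Sum.inr i)) (fun i => -(w (Sum.inl i))) := by
  funext k
  cases k with
  | inl i =>
    simp [hJ, Matrix.mulVec, dotProduct, Fintype.sum_sum_type, Matrix.fromBlocks,
      Matrix.one_apply, Finset.sum_ite_eq']
  | inr i =>
    simp [hJ, Matrix.mulVec, dotProduct, Fintype.sum_sum_type, Matrix.fromBlocks,
      Matrix.one_apply, Finset.sum_ite_eq']

private lemma block_symm (n : ℕ) (J Nm : Matrix (Fin n ⊕ Fin n) (Fin n ⊕ Fin n) ℝ)
    (hJ : J = Matrix.fromBlocks (0 : Matrix (Fin n) (Fin n) ℝ) 1 (-1) 0)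
    (hs : ∀ a c : Fin n ⊕ Fin n → ℝ, (Nm *ᵥ a) ⬝ᵥ (J *ᵥ c) = -(a ⬝ᵥ (J *ᵥ (Nm *ᵥ c))))
    (i j : Fin n) : Nm (Sum.inl i) (Sum.inr j) = Nm (Sum.inl j) (Sum.inr i) := by
  have hcol : ∀ (c : Fin n ⊕ Fin n), Nm *ᵥ Pi.single c (1:ℝ) = fun k => Nm k c := by
    intro c; rw [Matrix.mulVec_single_one]; rfl
  have h := hs (Pi.single (Sum.inr i) (1:ℝ)) (Pi.single (Sum.inr j) (1:ℝ))
  rw [hcol, hcol, Jcol n J hJ, Jcol n J hJ] at h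
  simp [dotProduct, Fintype.sum_sum_type, Pi.single_apply, Finset.sum_ite_eq'] at h
  linarith [h]

private lemma exists_lagrangian (n : ℕ) (J : Matrix (Fin n ⊕ Fin n) (Fin n ⊕ Fin n) ℝ)
    (hJT : Jᵀ = -J) (hmJ2 : (-J) * J = 1)
    (W : Submodule ℝ (Fin n ⊕ Fin n → ℝ))
    (hW : ∀ a ∈ W, ∀ b ∈ W, a ⬝ᵥ (J *ᵥ b) = 0) :
    ∃ L : Submodule ℝ (Fin n ⊕ Fin n → ℝ), W ≤ L ∧
      (∀ a ∈ L, ∀ b ∈ L, a ⬝ᵥ (J *ᵥ b) = 0) ∧ Module.finrank ℝ L = n := by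
  have hdimV : Module.finrank ℝ (Fin n ⊕ Fin n → ℝ) = n + n := by
    simp [Module.finrank_pi]
  have hbound : ∀ L : Submodule ℝ (Fin n ⊕ Fin n → ℝ),
      (∀ a ∈ L, ∀ b ∈ L, a ⬝ᵥ (J *ᵥ b) = 0) → Module.finrank ℝ L ≤ n := by
    intro L hL
    set f := Matrix.mulVecLin J with hf
    have hinj : Function.Injective f := by
      intro x y hxy
      have : (-J) *ᵥ (J *ᵥ x) = (-J) *ᵥ (J *ᵥ y) := by
        simp only [hf, Matrix.mulVecLin_apply] at hxy; rw [hxy]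
      simpa [Matrix.mulVec_mulVec, hmJ2, Matrix.one_mulVec] using this
    have heq : Module.finrank ℝ (L.map f) = Module.finrank ℝ L :=
      (LinearEquiv.finrank_eq (Submodule.equivMapOfInjective f hinj L)).symm
    have hinf : L ⊓ L.map f = ⊥ := by
      rw [eq_bot_iff]
      rintro x ⟨hx1, hx2⟩
      obtain ⟨b, hb, rfl⟩ := hx2
      have h0 : (f b) ⬝ᵥ ((f b) : Fin n ⊕ Fin n → ℝ) = 0 := by
        have := hL (f b) hx1 b hb
        simpa [hf, Matrix.mulVecLin_apply] using this
      have : (f b : Fin n ⊕ Fin n → ℝ) = 0 := by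
        rwa [dotProduct_self_eq_zero] at h0
      simp [Submodule.mem_bot, this]
    have hsum := Submodule.finrank_sup_add_finrank_inf_eq L (L.map f)
    rw [hinf] at hsum
    have hle : Module.finrank ℝ ↥(L ⊔ L.map f) ≤ n + n := by
      rw [← hdimV]; exact Submodule.finrank_le _
    simp [finrank_bot] at hsum
    omega
  have hext : ∀ L : Submodule ℝ (Fin n ⊕ Fin n → ℝ),
      (∀ a ∈ L, ∀ b ∈ L, a ⬝ᵥ (J *ᵥ b) = 0) → Module.finrank ℝ L < n →
      ∃ L' : Submodule ℝ (Fin n ⊕ Fin n → ℝ), L < L' ∧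
        (∀ a ∈ L', ∀ b ∈ L', a ⬝ᵥ (J *ᵥ b) = 0) := by
    intro L hL hlt
    set k := Module.finrank ℝ L with hk
    let b := Module.finBasis ℝ L
    let φ : (Fin n ⊕ Fin n → ℝ) →ₗ[ℝ] (Fin k → ℝ) :=
      LinearMap.pi fun i =>
        { toFun := fun x => ((b i : Fin n ⊕ Fin n → ℝ)) ⬝ᵥ (J *ᵥ x)
          map_add' := fun x y => by simp [Matrix.mulVec_add, dotProduct_add]
          map_smul' := fun c x => by simp [Matrix.mulVec_smul, dotProduct_smul] }
    have hker : ¬ (LinearMap.ker φ ≤ L) := by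
      intro hsub
      have h1 := LinearMap.finrank_range_add_finrank_ker φ
      have h2 : Module.finrank ℝ (LinearMap.range φ) ≤ k := by
        have := Submodule.finrank_le (LinearMap.range φ)
        simpa [Module.finrank_pi] using this
      have h3 : Module.finrank ℝ (LinearMap.ker φ) ≤ k :=
        Submodule.finrank_mono hsub
      rw [hdimV] at h1
      omega
    obtain ⟨v, hvker, hvL⟩ := SetLike.not_le_iff_exists.mp hker
    have hv0 : ∀ i, (b i : Fin n ⊕ Fin n → ℝ) ⬝ᵥ (J *ᵥ v) = 0 := by
      intro i
      have := LinearMap.mem_ker.mp hvker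
      exact congrFun this i
    have hvL' : ∀ l ∈ L, l ⬝ᵥ (J *ᵥ v) = 0 := by
      intro l hl
      have hrepr := b.sum_repr ⟨l, hl⟩
      have hcoe : l = ∑ i, (b.repr ⟨l, hl⟩ i) • (b i : Fin n ⊕ Fin n → ℝ) := by
        have := congrArg (Submodule.subtype L) hrepr
        simp only [map_sum, map_smul, Submodule.subtype_apply] at this
        exact this.symm
      rw [hcoe, sum_dot]
      simp only [smul_dotProduct, smul_eq_mul]
      simp [hv0]
    refine ⟨L ⊔ ℝ ∙ v, lt_of_le_of_ne le_sup_left ?_, ?_⟩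
    · intro h
      exact hvL (h ▸ Submodule.mem_sup_right (Submodule.mem_span_singleton_self v))
    · intro a ha c hc
      obtain ⟨y, hy, z, hz, rfl⟩ := Submodule.mem_sup.mp ha
      obtain ⟨y', hy', z', hz', rfl⟩ := Submodule.mem_sup.mp hc
      obtain ⟨s, rfl⟩ := Submodule.mem_span_singleton.mp hz
      obtain ⟨t, rfl⟩ := Submodule.mem_span_singleton.mp hz'
      have hvv : v ⬝ᵥ (J *ᵥ v) = 0 := by
        have h := skew_dot J hJT v v
        linear_combination h / 2
      have hvy' : v ⬝ᵥ (J *ᵥ y') = 0 := by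
        rw [skew_dot J hJT, hvL' y' hy', neg_zero]
      simp only [Matrix.mulVec_add, dotProduct_add, add_dotProduct,
        Matrix.mulVec_smul, dotProduct_smul, smul_dotProduct, smul_eq_mul]
      rw [hL y hy y' hy', hvy', hvL' y hy, hvv]
      ring
  suffices h : ∀ m : ℕ, ∀ L : Submodule ℝ (Fin n ⊕ Fin n → ℝ), W ≤ L →
      (∀ a ∈ L, ∀ b ∈ L, a ⬝ᵥ (J *ᵥ b) = 0) → n ≤ Module.finrank ℝ L + m →
      ∃ L' : Submodule ℝ (Fin n ⊕ Fin n → ℝ), W ≤ L' ∧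
        (∀ a ∈ L', ∀ b ∈ L', a ⬝ᵥ (J *ᵥ b) = 0) ∧ Module.finrank ℝ L' = n by
    exact h n W le_rfl hW (by omega)
  intro m
  induction m with
  | zero =>
    intro L hWL hL hge
    exact ⟨L, hWL, hL, le_antisymm (hbound L hL) (by omega)⟩
  | succ m ih =>
    intro L hWL hL hge
    by_cases hcase : Module.finrank ℝ L = n
    · exact ⟨L, hWL, hL, hcase⟩
    · have hlt : Module.finrank ℝ L < n := lt_of_le_of_ne (hbound L hL) hcase
      obtain ⟨L', hLL', hL'⟩ := hext L hL hlt
      have hr : Module.finrank ℝ L < Module.finrank ℝ L' :=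
        Submodule.finrank_lt_finrank_of_lt hLL'
      exact ih L' (le_trans hWL hLL'.le) hL' (by omega)

/-- Every symplectic quadratic shear `S(x) = x + (1/2) M(x) x` of
`ℝ^{2n} = ℝⁿ × ℝⁿ` is conjugate, by a linear symplectic map `λ` (given by an
invertible matrix `Λ` with `Λᵀ J Λ = J`), to a map of the form
`(q, p) ↦ (q + B(p) p, p)` with `p ↦ B(p)` linear and each `B(p)` symmetric
(equivalently `(q, p) ↦ (q + ∇V(p), p)` for a homogeneous cubic `V`). -/
theorem symplectic_shear_normal_form
    (n : ℕ)
    (J : Matrix (Fin n ⊕ Fin n) (Fin n ⊕ Fin n) ℝ)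
    (hJ : J = Matrix.fromBlocks (0 : Matrix (Fin n) (Fin n) ℝ) 1 (-1) 0)
    (M : (Fin n ⊕ Fin n → ℝ) →ₗ[ℝ] Matrix (Fin n ⊕ Fin n) (Fin n ⊕ Fin n) ℝ)
    (hsym : ∀ x y : Fin n ⊕ Fin n → ℝ, (M x).mulVec y = (M y).mulVec x)
    (S : (Fin n ⊕ Fin n → ℝ) → (Fin n ⊕ Fin n → ℝ))
    (hS : ∀ x, S x = x + (1 / 2 : ℝ) • (M x).mulVec x)
    (hsymp : ∀ x, ((1 : Matrix (Fin n ⊕ Fin n) (Fin n ⊕ Fin n) ℝ) + M x)ᵀ * J *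
      ((1 : Matrix (Fin n ⊕ Fin n) (Fin n ⊕ Fin n) ℝ) + M x) = J)
    (hnil : ∀ x, M x * M x = 0) :
    ∃ Λ Λinv : Matrix (Fin n ⊕ Fin n) (Fin n ⊕ Fin n) ℝ,
      Λ * Λinv = 1 ∧ Λinv * Λ = 1 ∧ Λᵀ * J * Λ = J ∧
      ∃ B : (Fin n → ℝ) →ₗ[ℝ] Matrix (Fin n) (Fin n) ℝ,
        (∀ p : Fin n → ℝ, (B p)ᵀ = B p) ∧
        ∀ q p : Fin n → ℝ,
          Λ.mulVec (S (Λinv.mulVec (Sum.elim q p))) = Sum.elim (q + (B p).mulVec p) p := by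
  classical
  have hJT : Jᵀ = -J := by
    rw [hJ]
    ext (i|i) (j|j) <;>
      simp [Matrix.fromBlocks, Matrix.transpose_apply, Matrix.one_apply, eq_comm]
  have hJJ : J * J = -1 := by
    rw [hJ, Matrix.fromBlocks_multiply]
    ext (i|i) (j|j) <;>
      simp [Matrix.fromBlocks, Matrix.one_apply, Sum.inl.injEq, Sum.inr.injEq]
  have hmJ2 : (-J) * J = 1 := by rw [Matrix.neg_mul, hJJ, neg_neg]
  -- key identity (M x)ᵀ J + J (M x) = 0
  have expand : ∀ y, (M y)ᵀ * J + J * M y + (M y)ᵀ * J * M y = 0 := by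
    intro y
    have h := hsymp y
    have hexp : (1 + M y)ᵀ * J * (1 + M y)
        = J + ((M y)ᵀ * J + J * M y + (M y)ᵀ * J * M y) := by
      rw [Matrix.transpose_add, Matrix.transpose_one]
      noncomm_ring
    rw [hexp] at h
    rwa [add_eq_left] at h
  have hscale : ∀ x, (2:ℝ) • ((M x)ᵀ * J + J * M x) + (4:ℝ) • ((M x)ᵀ * J * M x) = 0 := by
    intro x
    have h := expand ((2:ℝ) • x)
    rw [_root_.map_smul] at h
    have heq : ((2:ℝ) • M x)ᵀ * J + J * ((2:ℝ) • M x) + ((2:ℝ) • M x)ᵀ * J * ((2:ℝ) • M x)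
        = (2:ℝ) • ((M x)ᵀ * J + J * M x) + (4:ℝ) • ((M x)ᵀ * J * M x) := by
      simp only [Matrix.transpose_smul, smul_mul_assoc, mul_smul_comm, smul_smul, smul_add]
      norm_num
    rw [heq] at h
    exact h
  have hT1 : ∀ x, (M x)ᵀ * J + J * M x = 0 := by
    intro x
    have h1 := expand x
    have h2 := hscale x
    ext i j
    have e1 : ((M x)ᵀ * J + J * M x + (M x)ᵀ * J * M x) i j = (0 : Matrix _ _ ℝ) i j := by
      rw [h1]
    have e2 : ((2:ℝ) • ((M x)ᵀ * J + J * M x) + (4:ℝ) • ((M x)ᵀ * J * M x)) i j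
        = (0 : Matrix _ _ ℝ) i j := by rw [h2]
    simp only [Matrix.add_apply, Matrix.smul_apply, Matrix.zero_apply, smul_eq_mul] at e1 e2 ⊢
    linarith
  have hT1' : ∀ x, (M x)ᵀ * J = -(J * M x) := fun x => eq_neg_of_add_eq_zero_left (hT1 x)
  -- products of M's annihilate
  have hAC : ∀ x y, M x * M y = -(M y * M x) := by
    intro x y
    have h := hnil (x + y)
    rw [map_add, add_mul, mul_add, mul_add, hnil x, hnil y] at h
    have h' : M x * M y + M y * M x = 0 := by
      linear_combination (norm := abel_nf) h
    exact eq_neg_of_add_eq_zero_left h'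
  have key : ∀ x y z : Fin n ⊕ Fin n → ℝ, (M x) *ᵥ ((M y) *ᵥ z) = 0 := by
    have step : ∀ a b c : Fin n ⊕ Fin n → ℝ,
        (M a) *ᵥ ((M b) *ᵥ c) = -((M c) *ᵥ ((M a) *ᵥ b)) := by
      intro a b c
      rw [hsym b c, Matrix.mulVec_mulVec, hAC a c, Matrix.neg_mulVec, ← Matrix.mulVec_mulVec]
    intro x y z
    have h1 := step x y z
    rw [step z x y, step y z x] at h1
    simp only [Matrix.mulVec_neg, neg_neg] at h1
    funext i
    have h2 := congrFun h1 i
    simp only [Pi.neg_apply] at h2 ⊢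
    have h3 : (M x *ᵥ (M y *ᵥ z)) i = 0 := by linarith
    simpa using h3
  -- vectorized symplectic identity
  have hsymV : ∀ x (a c : Fin n ⊕ Fin n → ℝ),
      ((M x) *ᵥ a) ⬝ᵥ (J *ᵥ c) = -(a ⬝ᵥ (J *ᵥ ((M x) *ᵥ c))) := by
    intro x a c
    rw [dot_shift, Matrix.mulVec_mulVec, hT1' x, Matrix.neg_mulVec, dotProduct_neg,
      ← Matrix.mulVec_mulVec]
  -- the isotropic span of the range of M
  set W : Submodule ℝ (Fin n ⊕ Fin n → ℝ) :=
    Submodule.span ℝ {v | ∃ x y, (M x) *ᵥ y = v} with hWdef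
  have hgen : ∀ x y, (M x) *ᵥ y ∈ W := fun x y => Submodule.subset_span ⟨x, y, rfl⟩
  have hWiso : ∀ a ∈ W, ∀ b ∈ W, a ⬝ᵥ (J *ᵥ b) = 0 := by
    have hgen0 : ∀ x y, ∀ b ∈ W, ((M x) *ᵥ y) ⬝ᵥ (J *ᵥ b) = 0 := by
      intro x y
      have hle : W ≤ LinearMap.ker
          ({ toFun := fun b => ((M x) *ᵥ y) ⬝ᵥ (J *ᵥ b)
             map_add' := fun w1 w2 => by simp [Matrix.mulVec_add, dotProduct_add]
             map_smul' := fun c w1 => by simp [Matrix.mulVec_smul, dotProduct_smul] } :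
            (Fin n ⊕ Fin n → ℝ) →ₗ[ℝ] ℝ) := by
        rw [hWdef, Submodule.span_le]
        rintro w1 ⟨u, v, rfl⟩
        simp only [SetLike.mem_coe, LinearMap.mem_ker, LinearMap.coe_mk, AddHom.coe_mk]
        rw [hsymV x y, key x u v, Matrix.mulVec_zero, dotProduct_zero, neg_zero]
      intro b hb
      exact LinearMap.mem_ker.mp (hle hb)
    intro a ha b hb
    have hle : W ≤ LinearMap.ker
        ({ toFun := fun a' => a' ⬝ᵥ (J *ᵥ b)
           map_add' := fun w1 w2 => by simp [add_dotProduct]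
           map_smul' := fun c w1 => by simp [smul_dotProduct] } :
          (Fin n ⊕ Fin n → ℝ) →ₗ[ℝ] ℝ) := by
      rw [hWdef, Submodule.span_le]
      rintro g ⟨x, y, rfl⟩
      simp only [SetLike.mem_coe, LinearMap.mem_ker, LinearMap.coe_mk, AddHom.coe_mk]
      exact hgen0 x y b hb
    exact LinearMap.mem_ker.mp (hle ha)
  obtain ⟨L, hWL, hLiso, hLrank⟩ := exists_lagrangian n J hJT hmJ2 W hWiso
  -- a basis of the Lagrangian
  let b : Module.Basis (Fin n) ℝ L := (Module.finBasis ℝ L).reindex (finCongr hLrank)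
  set u : Fin n → (Fin n ⊕ Fin n → ℝ) := fun i => (b i : Fin n ⊕ Fin n → ℝ) with hu
  have hu_mem : ∀ i, u i ∈ L := fun i => (b i).2
  set A : Matrix (Fin n ⊕ Fin n) (Fin n) ℝ := Matrix.of fun i j => u j i with hA
  have hAmul : ∀ c : Fin n → ℝ, A *ᵥ c = ∑ j, c j • u j := by
    intro c; funext i
    simp [hA, Matrix.mulVec, dotProduct, Finset.sum_apply, mul_comm]
  have hAc_mem : ∀ c, A *ᵥ c ∈ L := by
    intro c; rw [hAmul]
    exact Submodule.sum_mem _ fun j _ => Submodule.smul_mem _ _ (hu_mem j)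
  have hu_li : LinearIndependent ℝ u := b.linearIndependent.map' L.subtype L.ker_subtype
  have hLspan : ∀ w ∈ L, ∃ c, A *ᵥ c = w := by
    intro w hw
    refine ⟨fun j => b.repr ⟨w, hw⟩ j, ?_⟩
    rw [hAmul]
    have hc := congrArg (Submodule.subtype L) (b.sum_repr ⟨w, hw⟩)
    simp only [map_sum, map_smul, Submodule.subtype_apply] at hc
    exact hc
  -- Gram matrix
  set G : Matrix (Fin n) (Fin n) ℝ := Aᵀ * A with hG
  have hGsym : Gᵀ = G := by rw [hG, Matrix.transpose_mul, Matrix.transpose_transpose]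
  have hGker : ∀ c, G *ᵥ c = 0 → c = 0 := by
    intro c hc
    have h1 : (A *ᵥ c) ⬝ᵥ (A *ᵥ c) = 0 := by
      rw [dot_shift, Matrix.mulVec_mulVec, ← hG, hc, dotProduct_zero]
    have h2 : A *ᵥ c = 0 := by
      rwa [dotProduct_self_eq_zero] at h1
    have h3 := Fintype.linearIndependent_iff.mp hu_li c
    have h4 : ∑ j, c j • u j = 0 := by rw [← hAmul]; exact h2
    funext j; exact h3 h4 j
  have hGdet : IsUnit G.det := by
    by_contra h
    have hdet0 : G.det = 0 := by simpa [isUnit_iff_ne_zero] using h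
    obtain ⟨v, hv0, hv⟩ := (Matrix.exists_mulVec_eq_zero_iff).mpr hdet0
    exact hv0 (hGker v hv)
  have hGG : G * G⁻¹ = 1 := Matrix.mul_nonsing_inv G hGdet
  have hGG' : G⁻¹ * G = 1 := Matrix.nonsing_inv_mul G hGdet
  have hGiT : (G⁻¹)ᵀ = G⁻¹ := by rw [Matrix.transpose_nonsing_inv, hGsym]
  -- the symplectic basis matrix
  set Vm : Matrix (Fin n ⊕ Fin n) (Fin n) ℝ := -(J * A * G⁻¹) with hVm
  set P : Matrix (Fin n ⊕ Fin n) (Fin n ⊕ Fin n) ℝ := Matrix.fromCols A Vm with hP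
  have hAJA : Aᵀ * J * A = 0 := by
    ext j k
    have hentry : (Aᵀ * J * A) j k = u j ⬝ᵥ (J *ᵥ u k) := by
      rw [Matrix.mul_assoc]
      simp [hA, Matrix.mul_apply, Matrix.mulVec, dotProduct]
    rw [hentry, hLiso (u j) (hu_mem j) (u k) (hu_mem k)]
    simp
  have hJVm : J * Vm = A * G⁻¹ := by
    rw [hVm, Matrix.mul_neg, ← Matrix.mul_assoc, ← Matrix.mul_assoc, hJJ, Matrix.neg_mul,
      Matrix.one_mul, Matrix.neg_mul, neg_neg]
  have hJAV : Aᵀ * J * Vm = 1 := by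
    rw [Matrix.mul_assoc, hJVm, ← Matrix.mul_assoc, ← hG, hGG]
  have hVmT : Vmᵀ = G⁻¹ * Aᵀ * J := by
    rw [hVm, Matrix.transpose_neg, Matrix.transpose_mul, Matrix.transpose_mul, hGiT, hJT,
      Matrix.mul_neg, Matrix.mul_neg, neg_neg, ← Matrix.mul_assoc]
  have hVA : Vmᵀ * A = 0 := by
    rw [hVmT, Matrix.mul_assoc G⁻¹ Aᵀ J, Matrix.mul_assoc G⁻¹ (Aᵀ * J) A,
      hAJA, Matrix.mul_zero]
  have hVJA : Vmᵀ * J * A = -1 := by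
    rw [hVmT, Matrix.mul_assoc (G⁻¹ * Aᵀ) J J, hJJ, Matrix.mul_neg, Matrix.mul_one,
      Matrix.neg_mul, Matrix.mul_assoc, ← hG, hGG']
  have hVJV : Vmᵀ * J * Vm = 0 := by
    rw [Matrix.mul_assoc, hJVm, ← Matrix.mul_assoc, hVA, Matrix.zero_mul]
  have hPJP : Pᵀ * J * P = J := by
    rw [hP, Matrix.transpose_fromCols, Matrix.fromRows_mul,
      Matrix.fromRows_mul_fromCols, hAJA, hJAV, hVJA, hVJV, ← hJ]
  -- the conjugating matrices
  set Lam : Matrix (Fin n ⊕ Fin n) (Fin n ⊕ Fin n) ℝ := -(J * Pᵀ * J) with hLam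
  have hLamP : Lam * P = 1 := by
    have h1 : Lam * P = -(J * (Pᵀ * J * P)) := by
      rw [hLam, Matrix.neg_mul]
      simp only [Matrix.mul_assoc]
    rw [h1, hPJP, hJJ, neg_neg]
  have hPLam : P * Lam = 1 := mul_eq_one_comm.mp hLamP
  have hLamPT : Lamᵀ * Pᵀ = 1 := by
    have h := congrArg Matrix.transpose hPLam
    rwa [Matrix.transpose_mul, Matrix.transpose_one] at h
  have hLamsymp : Lamᵀ * J * Lam = J := by
    calc Lamᵀ * J * Lam = Lamᵀ * (Pᵀ * J * P) * Lam := by rw [hPJP]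
    _ = (Lamᵀ * Pᵀ) * J * (P * Lam) := by simp only [Matrix.mul_assoc]
    _ = J := by rw [hLamPT, hPLam, Matrix.one_mul, Matrix.mul_one]
  -- mapping facts
  have hQA : ∀ q : Fin n → ℝ, P *ᵥ (Sum.elim q 0) = A *ᵥ q := by
    intro q
    rw [hP, Matrix.fromCols_mulVec_sumElim, Matrix.mulVec_zero, add_zero]
  have hLamA : ∀ c : Fin n → ℝ, Lam *ᵥ (A *ᵥ c) = Sum.elim c 0 := by
    intro c
    rw [← hQA, Matrix.mulVec_mulVec, hLamP, Matrix.one_mulVec]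
  have hrange : ∀ w ∈ L, ∃ c : Fin n → ℝ, Lam *ᵥ w = Sum.elim c (0 : Fin n → ℝ) := by
    intro w hw
    obtain ⟨c, rfl⟩ := hLspan w hw
    exact ⟨c, hLamA c⟩
  -- M annihilates the Lagrangian L
  have hkill : ∀ x : Fin n ⊕ Fin n → ℝ, ∀ w ∈ L, (M x) *ᵥ w = 0 := by
    intro x w hw
    have hJa : J *ᵥ ((M x) *ᵥ w) = 0 := by
      funext k
      have h1 : (J *ᵥ ((M x) *ᵥ w)) k = Pi.single k (1:ℝ) ⬝ᵥ (J *ᵥ ((M x) *ᵥ w)) := by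
        rw [single_dotProduct, one_mul]
      rw [h1]
      have h2 := hsymV x (Pi.single k (1:ℝ)) w
      have h3 : ((M x) *ᵥ Pi.single k (1:ℝ)) ⬝ᵥ (J *ᵥ w) = 0 :=
        hLiso _ (hWL (hgen x (Pi.single k (1:ℝ)))) w hw
      rw [h3] at h2
      have h4 : Pi.single k (1:ℝ) ⬝ᵥ (J *ᵥ ((M x) *ᵥ w)) = 0 := neg_eq_zero.mp h2.symm
      rw [h4]
      rfl
    have h5 : ((-J) * J) *ᵥ ((M x) *ᵥ w) = 0 := by
      rw [← Matrix.mulVec_mulVec, hJa, Matrix.mulVec_zero]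
    rwa [hmJ2, Matrix.one_mulVec] at h5
  -- elementary Sum.elim facts
  have hsplit : ∀ q p : Fin n → ℝ,
      Sum.elim q p = Sum.elim q (0 : Fin n → ℝ) + Sum.elim (0 : Fin n → ℝ) p := by
    intro q p; funext i; cases i <;> simp
  have helim_add : ∀ p p' : Fin n → ℝ,
      Sum.elim (0 : Fin n → ℝ) (p + p') = Sum.elim (0 : Fin n → ℝ) p + Sum.elim (0 : Fin n → ℝ) p' := by
    intro p p'; funext i; cases i <;> simp
  have helim_smul : ∀ (r : ℝ) (p : Fin n → ℝ),
      Sum.elim (0 : Fin n → ℝ) (r • p) = r • Sum.elim (0 : Fin n → ℝ) p := by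
    intro r p; funext i; cases i <;> simp
  -- the conjugated quadratic form matrix
  set N : (Fin n → ℝ) → Matrix (Fin n ⊕ Fin n) (Fin n ⊕ Fin n) ℝ :=
    fun p => Lam * M (P *ᵥ (Sum.elim (0 : Fin n → ℝ) p)) * P with hN
  have hNvec : ∀ (p : Fin n → ℝ) (v : Fin n ⊕ Fin n → ℝ),
      (N p) *ᵥ v = Lam *ᵥ ((M (P *ᵥ (Sum.elim (0 : Fin n → ℝ) p))) *ᵥ (P *ᵥ v)) := by
    intro p v
    rw [hN, Matrix.mulVec_mulVec, Matrix.mulVec_mulVec]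
  have hNadd : ∀ p p', N (p + p') = N p + N p' := by
    intro p p'
    rw [hN]
    simp only [helim_add, Matrix.mulVec_add, map_add, Matrix.add_mul, Matrix.mul_add]
  have hNsmul : ∀ (r : ℝ) p, N (r • p) = r • N p := by
    intro r p
    rw [hN]
    simp only [helim_smul, Matrix.mulVec_smul, _root_.map_smul, Matrix.mul_smul,
      Matrix.smul_mul]
  have hNid : ∀ v : Fin n ⊕ Fin n → ℝ, Lam *ᵥ (P *ᵥ v) = v := by
    intro v
    rw [Matrix.mulVec_mulVec, hLamP, Matrix.one_mulVec]
  have hwLam : ∀ s t : Fin n ⊕ Fin n → ℝ,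
      (Lam *ᵥ s) ⬝ᵥ (J *ᵥ (Lam *ᵥ t)) = s ⬝ᵥ (J *ᵥ t) := by
    intro s t
    rw [dot_shift, Matrix.mulVec_mulVec, Matrix.mulVec_mulVec, hLamsymp]
  have hNsymp : ∀ (p : Fin n → ℝ) (a c : Fin n ⊕ Fin n → ℝ),
      ((N p) *ᵥ a) ⬝ᵥ (J *ᵥ c) = -(a ⬝ᵥ (J *ᵥ ((N p) *ᵥ c))) := by
    intro p a c
    calc ((N p) *ᵥ a) ⬝ᵥ (J *ᵥ c)
        = (Lam *ᵥ ((M (P *ᵥ (Sum.elim (0 : Fin n → ℝ) p))) *ᵥ (P *ᵥ a))) ⬝ᵥ (J *ᵥ (Lam *ᵥ (P *ᵥ c))) := by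
          rw [hNvec, hNid]
      _ = ((M (P *ᵥ (Sum.elim (0 : Fin n → ℝ) p))) *ᵥ (P *ᵥ a)) ⬝ᵥ (J *ᵥ (P *ᵥ c)) := hwLam _ _
      _ = -((P *ᵥ a) ⬝ᵥ (J *ᵥ ((M (P *ᵥ (Sum.elim (0 : Fin n → ℝ) p))) *ᵥ (P *ᵥ c)))) := hsymV _ _ _
      _ = -((Lam *ᵥ (P *ᵥ a)) ⬝ᵥ (J *ᵥ (Lam *ᵥ ((M (P *ᵥ (Sum.elim (0 : Fin n → ℝ) p))) *ᵥ (P *ᵥ c))))) := by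
          rw [hwLam]
      _ = -(a ⬝ᵥ (J *ᵥ ((N p) *ᵥ c))) := by rw [hNid, hNvec]
  -- structural facts about N
  have hNrow : ∀ (p : Fin n → ℝ) (v : Fin n ⊕ Fin n → ℝ) (i : Fin n),
      ((N p) *ᵥ v) (Sum.inr i) = 0 := by
    intro p v i
    rw [hNvec]
    obtain ⟨c, hc⟩ := hrange _ (hWL (hgen (P *ᵥ (Sum.elim (0 : Fin n → ℝ) p)) (P *ᵥ v)))
    rw [hc]
    rfl
  have hsingle : ∀ j : Fin n, Pi.single (Sum.inl j : Fin n ⊕ Fin n) (1:ℝ)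
      = Sum.elim (Pi.single j (1:ℝ)) 0 := by
    intro j
    funext i
    cases i <;> simp [Pi.single_apply, Sum.inl.injEq]
  have hNcol : ∀ (p : Fin n → ℝ) (j : Fin n),
      (N p) *ᵥ (Pi.single (Sum.inl j : Fin n ⊕ Fin n) (1:ℝ)) = 0 := by
    intro p j
    rw [hNvec, hsingle, hQA, hkill _ _ (hAc_mem _), Matrix.mulVec_zero]
  have hNcol' : ∀ (p : Fin n → ℝ) (k : Fin n ⊕ Fin n) (j : Fin n),
      N p k (Sum.inl j) = 0 := by
    intro p k j
    have h := congrFun (hNcol p j) k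
    rw [Matrix.mulVec_single] at h
    simpa using h
  have hNrow' : ∀ (p : Fin n → ℝ) (i : Fin n) (k : Fin n ⊕ Fin n),
      N p (Sum.inr i) k = 0 := by
    intro p i k
    have h := hNrow p (Pi.single k (1:ℝ)) i
    rw [Matrix.mulVec_single] at h
    simpa using h
  -- symmetry of the upper-right block of N
  have hNsymm : ∀ (p : Fin n → ℝ) (i j : Fin n),
      N p (Sum.inl i) (Sum.inr j) = N p (Sum.inl j) (Sum.inr i) :=
    fun p i j => block_symm n J (N p) hJ (hNsymp p) i j
  refine ⟨Lam, P, hLamP, hPLam, hLamsymp,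
    ⟨{ toFun := fun p => Matrix.of fun i j => (1/2 : ℝ) * (N p (Sum.inl i) (Sum.inr j))
       map_add' := ?_
       map_smul' := ?_ }, ?_, ?_⟩⟩
  · intro p p'
    ext i j
    simp only [Matrix.of_apply, hNadd, Matrix.add_apply]
    ring
  · intro r p
    ext i j
    simp only [Matrix.of_apply, hNsmul, Matrix.smul_apply, smul_eq_mul, RingHom.id_apply]
    ring
  · intro p
    ext i j
    simp only [Matrix.transpose_apply, Matrix.of_apply, LinearMap.coe_mk, AddHom.coe_mk]
    rw [hNsymm]
  · intro q p
    have hx1 : P *ᵥ (Sum.elim q (0 : Fin n → ℝ)) ∈ L := by rw [hQA]; exact hAc_mem q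
    have k1 : (M (P *ᵥ (Sum.elim q (0 : Fin n → ℝ)))) *ᵥ (P *ᵥ (Sum.elim q (0 : Fin n → ℝ)))
        = 0 := hkill _ _ hx1
    have k2 : (M (P *ᵥ (Sum.elim (0 : Fin n → ℝ) p))) *ᵥ (P *ᵥ (Sum.elim q (0 : Fin n → ℝ)))
        = 0 := hkill _ _ hx1
    have k3 : (M (P *ᵥ (Sum.elim q (0 : Fin n → ℝ)))) *ᵥ (P *ᵥ (Sum.elim (0 : Fin n → ℝ) p))
        = 0 := by rw [hsym]; exact k2
    have hMxx : (M (P *ᵥ (Sum.elim q p))) *ᵥ (P *ᵥ (Sum.elim q p))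
        = (M (P *ᵥ (Sum.elim (0 : Fin n → ℝ) p))) *ᵥ (P *ᵥ (Sum.elim (0 : Fin n → ℝ) p)) := by
      rw [hsplit q p, Matrix.mulVec_add, map_add, Matrix.add_mulVec,
        Matrix.mulVec_add, Matrix.mulVec_add, k1, k2, k3]
      simp
    show Lam *ᵥ (S (P *ᵥ (Sum.elim q p))) = Sum.elim (q + _) p
    rw [hS, Matrix.mulVec_add, Matrix.mulVec_smul, hNid, hMxx, ← hNvec p (Sum.elim (0 : Fin n → ℝ) p)]
    funext k
    cases k with
    | inl i =>
      simp only [Pi.add_apply, Pi.smul_apply, Sum.elim_inl, smul_eq_mul]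
      congr 1
      simp only [Matrix.mulVec, dotProduct, Fintype.sum_sum_type, Matrix.of_apply,
        LinearMap.coe_mk, AddHom.coe_mk, Pi.zero_apply, Sum.elim_inl, Sum.elim_inr,
        mul_zero, Finset.sum_const_zero, zero_add, Finset.mul_sum]
      apply Finset.sum_congr rfl
      intro j _
      ring
    | inr i =>
      simp only [Pi.add_apply, Pi.smul_apply, Sum.elim_inr, smul_eq_mul]
      rw [hNrow p _ i]
      ring
end

section
/- Consider the map f : ℝ³ → ℝ³, f(x, y, z) = (α + τx − σy + z + Q(x, y), x, y), with Q(x, y) = ax² + bxy + cy². Suppose a = c and a + b + c ≠ 0, and set η = (τ − σ)/(a + b + c). Then the map h : ℝ³ → ℝ³, h(x, y, z) = (−(z + η), −(y + η), −(x + η)), is an involution (h ∘ h = id) and is a reversor of f, i.e. h ∘ f = f⁻¹ ∘ h (equivalently, f ∘ h ∘ f = h). -/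
/-- For the normal form map
`f(x,y,z) = (α + τx - σy + z + Q(x,y), x, y)` with `Q(x,y) = ax² + bxy + cy²`,
if `a = c` and `a + b + c ≠ 0` then, with `η = (τ - σ)/(a + b + c)`, the map
`h(x,y,z) = (-(z + η), -(y + η), -(x + η))` is an involution and a reversor of `f`:
`h ∘ f = f⁻¹ ∘ h`, equivalently `f ∘ h ∘ f = h`. -/
theorem reversor_of_normal_form
    (α τ σ a b c : ℝ) (hac : a = c) (habc : a + b + c ≠ 0)
    (f : ℝ × ℝ × ℝ → ℝ × ℝ × ℝ)
    (hf : ∀ p : ℝ × ℝ × ℝ, f p =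
      (α + τ * p.1 - σ * p.2.1 + p.2.2 +
        (a * p.1 ^ 2 + b * p.1 * p.2.1 + c * p.2.1 ^ 2), p.1, p.2.1))
    (η : ℝ) (hη : η = (τ - σ) / (a + b + c))
    (h : ℝ × ℝ × ℝ → ℝ × ℝ × ℝ)
    (hh : ∀ p : ℝ × ℝ × ℝ, h p = (-(p.2.2 + η), -(p.2.1 + η), -(p.1 + η))) :
    Function.Involutive h ∧
    Function.Bijective f ∧
    (∀ p, h (f p) = Function.invFun f (h p)) ∧
    (∀ p, f (h (f p)) = h p) := by

  have key : η * (a + b + c) = τ - σ := by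
    rw [hη]; field_simp
  have hinv : Function.Involutive h := by
    intro p; simp [hh]
  have hcore : ∀ p, f (h (f p)) = h p := by
    intro p
    simp only [hf, hh]
    refine Prod.ext ?_ rfl
    simp only
    linear_combination (p.1 + p.2.1 + η) * key + (p.2.1 * η - η * p.1 + p.2.1 ^ 2 - p.1 ^ 2) * hac
  set g : ℝ × ℝ × ℝ → ℝ × ℝ × ℝ := fun q =>
    (q.2.1, q.2.2, q.1 - α - τ * q.2.1 + σ * q.2.2 -
      (a * q.2.1 ^ 2 + b * q.2.1 * q.2.2 + c * q.2.2 ^ 2)) with hg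
  have hleft : Function.LeftInverse g f := by
    intro p; simp [hf, hg]; ring_nf
  have hright : Function.RightInverse g f := by
    rintro ⟨x, y, z⟩; simp [hf, hg]; ring
  have hbij : Function.Bijective f := ⟨hleft.injective, hright.surjective⟩
  refine ⟨hinv, hbij, ?_, hcore⟩
  intro p
  apply hbij.injective
  rw [hcore p, Function.rightInverse_invFun hbij.surjective]
end
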